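/- arXiv:math/0405601 — 7 statements merged into one kernel-verified Lean document; each statement's English description precedes it below -/
import Mathlib

section
/- Let X₁, X₂, … be 4-wise independent ±1 random variables with mean zero, and S_n = ∑_{i=1}^n X_i. Then for every M > 0, P(S_n² > M) ≥ (n − M)² / (3n² − 2n) for all n > M; in particular liminf_{n→∞} P(S_n² > M) ≥ 1/3 for every fixed M. -/
open MeasureTheory ProbabilityTheory Filter Topology

/-!
Since `X i ^ 2 = 1`, a product `X i * X j * X k * X l` in which one index occurs exactly once
has mean zero: a repeated pair cancels, and what remains splits into two independent factors,
one of which is centred. Expanding `S (n + 1) = S n + X n` therefore gives `E[S n ^ 2] = n` and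
`E[S n ^ 4] = 3 n ^ 2 - 2 n` by induction, and the Paley–Zygmund inequality for `Z = S n ^ 2`
yields the bound `(n - M) ^ 2 / (3 n ^ 2 - 2 n)`, which tends to `1 / 3`.
-/

theorem abs_sum_le_card {ι : Type*} (s : Finset ι) {x : ι → ℝ} (hx : ∀ i, |x i| ≤ 1) :
    |∑ i ∈ s, x i| ≤ s.card :=
  calc |∑ i ∈ s, x i| ≤ ∑ i ∈ s, |x i| := Finset.abs_sum_le_sum_abs _ _
    _ ≤ ∑ i ∈ s, 1 := Finset.sum_le_sum fun i _ => hx i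
    _ = s.card := by simp

theorem abs_eq_one_of_sq_eq_one {x : ℝ} (h : x ^ 2 = 1) : |x| = 1 :=
  (pow_eq_one_iff_of_nonneg (abs_nonneg x) two_ne_zero).1 (by rwa [sq_abs])

section

variable {Ω : Type*} [MeasurableSpace Ω] {μ : Measure Ω}

theorem paley_zygmund [IsProbabilityMeasure μ] {Z : Ω → ℝ} (hZm : Measurable Z)
    (hZ : MemLp Z 2 μ) {M : ℝ} (hM : 0 ≤ M) (hMZ : M ≤ μ[Z]) :
    (μ[Z] - M) ^ 2 / ∫ ω, Z ω ^ 2 ∂μ ≤ μ.real {ω | M < Z ω} := by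
  set A := {ω | M < Z ω}
  set c := ∫ ω, Z ω ^ 2 ∂μ
  -- the minimiser in `s` of `s ^ 2 * c - 2 * s * (μ[Z] - M)`
  set s := (μ[Z] - M) / c
  have hs : 0 ≤ s := div_nonneg (sub_nonneg.2 hMZ) (integral_nonneg fun ω => sq_nonneg _)
  -- on `A` this is `0 ≤ (s Z - 1)²`, off `A` the left side is `≤ 0`
  have hpt : ∀ ω, 2 * s * (Z ω - M) ≤ s ^ 2 * Z ω ^ 2 + A.indicator 1 ω := by
    intro ω
    by_cases hω : ω ∈ A
    · rw [Set.indicator_of_mem hω, Pi.one_apply]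
      nlinarith [sq_nonneg (s * Z ω - 1)]
    · rw [Set.indicator_of_notMem hω]
      have : Z ω ≤ M := not_lt.1 hω
      nlinarith [sq_nonneg (s * Z ω)]
  have hint : 2 * s * (μ[Z] - M) ≤ s ^ 2 * c + μ.real A := by
    have hA : MeasurableSet A := measurableSet_lt measurable_const hZm
    have hZ1 := hZ.integrable one_le_two
    have hZ2 := (memLp_two_iff_integrable_sq hZ.1).1 hZ
    have h1A : Integrable (A.indicator 1) μ := (integrable_const (1 : ℝ)).indicator hA
    calc 2 * s * (μ[Z] - M) = ∫ ω, 2 * s * (Z ω - M) ∂μ := by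
          rw [integral_const_mul, integral_sub hZ1 (integrable_const M)]; simp
      _ ≤ ∫ ω, (s ^ 2 * Z ω ^ 2 + A.indicator 1 ω) ∂μ :=
          integral_mono ((hZ1.sub (integrable_const M)).const_mul _)
            ((hZ2.const_mul _).add h1A) hpt
      _ = s ^ 2 * c + μ.real A := by
          rw [integral_add (hZ2.const_mul _) h1A,
            integral_const_mul, integral_indicator_one hA]
  have hc : 0 ≤ c := integral_nonneg fun ω => sq_nonneg (Z ω)
  rcases hc.eq_or_lt with hc | hc
  · rw [← hc, div_zero]; exact measureReal_nonneg
  · have : s * (μ[Z] - M) = (μ[Z] - M) ^ 2 / c := by rw [div_mul_eq_mul_div, sq]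
    have : s ^ 2 * c = (μ[Z] - M) ^ 2 / c := by rw [div_pow]; field_simp
    linarith

theorem integral_eq_zero_of_eq_one_or_eq_neg_one [IsProbabilityMeasure μ] {Y : Ω → ℝ}
    (hY : Measurable Y) (hpm : ∀ ω, Y ω = 1 ∨ Y ω = -1)
    (hhalf : μ {ω | Y ω = 1} = 1 / 2) :
    μ[Y] = 0 := by
  set A := {ω | Y ω = 1}
  have hA : MeasurableSet A := hY (measurableSet_singleton 1)
  have h1A : Integrable (A.indicator 1) μ := (integrable_const (1 : ℝ)).indicator hA
  have hYA : ∀ ω, Y ω = 2 * A.indicator 1 ω - 1 := by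
    intro ω
    by_cases hω : ω ∈ A
    · rw [Set.indicator_of_mem hω, hω.out]; norm_num
    · rw [Set.indicator_of_notMem hω, (hpm ω).resolve_left hω]; norm_num
  rw [integral_congr_ae (ae_of_all _ hYA), integral_sub (h1A.const_mul 2) (integrable_const 1),
    integral_const_mul, integral_indicator_one hA, measureReal_def, hhalf]
  norm_num

section FourwiseIndependent

variable {ι : Type*} [DecidableEq ι] {X : ι → Ω → ℝ}

theorem indepFun_of_fourwise
    (hindep : ∀ s : Finset ι, s.card ≤ 4 → iIndepFun (fun i : s => X i) μ)
    {i j : ι} (hij : i ≠ j) : IndepFun (X i) (X j) μ :=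
  (hindep {i, j} (Finset.card_le_two.trans (by norm_num))).indepFun
    (i := ⟨i, by simp⟩) (j := ⟨j, by simp⟩) (by simpa using hij)

theorem indepFun_mul_mul_of_fourwise (hmeas : ∀ i, Measurable (X i))
    (hindep : ∀ s : Finset ι, s.card ≤ 4 → iIndepFun (fun i : s => X i) μ)
    {i j k l : ι} (hik : i ≠ k) (hil : i ≠ l) (hjk : j ≠ k) (hjl : j ≠ l) :
    IndepFun (X i * X j) (X k * X l) μ :=
  (hindep {i, j, k, l} Finset.card_le_four).indepFun_mul_mul (fun m => hmeas m)
    ⟨i, by simp⟩ ⟨j, by simp⟩ ⟨k, by simp⟩ ⟨l, by simp⟩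
    (by simpa using hik) (by simpa using hil) (by simpa using hjk) (by simpa using hjl)

theorem integral_mul_eq_zero_of_fourwise (hmeas : ∀ i, Measurable (X i))
    (hmean : ∀ i, μ[X i] = 0)
    (hindep : ∀ s : Finset ι, s.card ≤ 4 → iIndepFun (fun i : s => X i) μ)
    {i j : ι} (hij : i ≠ j) : ∫ ω, X i ω * X j ω ∂μ = 0 := by
  have := (indepFun_of_fourwise hindep hij).integral_mul_eq_mul_integral
    (hmeas i).aestronglyMeasurable (hmeas j).aestronglyMeasurable
  simpa [hmean] using this

theorem integral_mul_mul_mul_eq_zero_of_fourwise (hmeas : ∀ i, Measurable (X i))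
    (hsq : ∀ i ω, X i ω ^ 2 = 1) (hmean : ∀ i, μ[X i] = 0)
    (hindep : ∀ s : Finset ι, s.card ≤ 4 → iIndepFun (fun i : s => X i) μ)
    {i j k l : ι} (hil : i ≠ l) (hjl : j ≠ l) (hkl : k ≠ l) :
    ∫ ω, X i ω * X j ω * X k ω * X l ω ∂μ = 0 := by
  by_cases hki : k = i
  · subst hki
    simp_rw [fun ω => show X k ω * X j ω * X k ω * X l ω = X j ω * X l ω by
      linear_combination X j ω * X l ω * hsq k ω]
    exact integral_mul_eq_zero_of_fourwise hmeas hmean hindep hjl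
  by_cases hkj : k = j
  · subst hkj
    simp_rw [fun ω => show X i ω * X k ω * X k ω * X l ω = X i ω * X l ω by
      linear_combination X i ω * X l ω * hsq k ω]
    exact integral_mul_eq_zero_of_fourwise hmeas hmean hindep hil
  have := (indepFun_mul_mul_of_fourwise hmeas hindep (Ne.symm hki) hil (Ne.symm hkj)
    hjl).integral_mul_eq_mul_integral ((hmeas i).mul (hmeas j)).aestronglyMeasurable
    ((hmeas k).mul (hmeas l)).aestronglyMeasurable
  simpa [mul_assoc, integral_mul_eq_zero_of_fourwise hmeas hmean hindep hkl] using this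

end FourwiseIndependent

section Moments

variable [IsProbabilityMeasure μ] {X : ℕ → Ω → ℝ}

theorem integrable_sum_range_pow (hmeas : ∀ i, Measurable (X i)) (hsq : ∀ i ω, X i ω ^ 2 = 1)
    (n k : ℕ) : Integrable (fun ω => (∑ i ∈ Finset.range n, X i ω) ^ k) μ :=
  .of_bound (by fun_prop) ((n : ℝ) ^ k) (ae_of_all _ fun ω => by
    rw [norm_pow]
    gcongr
    simpa using abs_sum_le_card (Finset.range n) fun i => (abs_eq_one_of_sq_eq_one (hsq i ω)).le)

theorem integrable_sum_range_pow_mul (hmeas : ∀ i, Measurable (X i))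
    (hsq : ∀ i ω, X i ω ^ 2 = 1) (n k : ℕ) :
    Integrable (fun ω => (∑ i ∈ Finset.range n, X i ω) ^ k * X n ω) μ :=
  (integrable_sum_range_pow hmeas hsq n k).mul_bdd (hmeas n).aestronglyMeasurable
    (ae_of_all _ fun ω => (abs_eq_one_of_sq_eq_one (hsq n ω)).le)

theorem integral_sum_range_mul_eq_zero (hmeas : ∀ i, Measurable (X i))
    (hsq : ∀ i ω, X i ω ^ 2 = 1) (hmean : ∀ i, μ[X i] = 0)
    (hindep : ∀ s : Finset ℕ, s.card ≤ 4 → iIndepFun (fun i : s => X i) μ) (n : ℕ) :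
    ∫ ω, (∑ i ∈ Finset.range n, X i ω) * X n ω ∂μ = 0 := by
  simp_rw [Finset.sum_mul]
  rw [integral_finsetSum]
  · exact Finset.sum_eq_zero fun i hi => integral_mul_eq_zero_of_fourwise hmeas hmean hindep
      (Finset.mem_range.1 hi).ne
  · intro i _
    exact .of_bound (by fun_prop) 1 (ae_of_all _ fun ω => by simp [abs_eq_one_of_sq_eq_one, hsq])

theorem integral_sum_range_pow_three_mul_eq_zero (hmeas : ∀ i, Measurable (X i))
    (hsq : ∀ i ω, X i ω ^ 2 = 1) (hmean : ∀ i, μ[X i] = 0)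
    (hindep : ∀ s : Finset ℕ, s.card ≤ 4 → iIndepFun (fun i : s => X i) μ) (n : ℕ) :
    ∫ ω, (∑ i ∈ Finset.range n, X i ω) ^ 3 * X n ω ∂μ = 0 := by
  have hexp : ∀ ω, (∑ i ∈ Finset.range n, X i ω) ^ 3 * X n ω =
      ∑ p ∈ Finset.range n ×ˢ Finset.range n ×ˢ Finset.range n,
        X p.2.2 ω * X p.2.1 ω * X p.1 ω * X n ω := by
    intro ω
    simp only [Finset.sum_product, pow_three, Finset.sum_mul, Finset.mul_sum, mul_assoc]
  simp_rw [hexp]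
  rw [integral_finsetSum]
  · refine Finset.sum_eq_zero fun p hp => ?_
    simp only [Finset.mem_product, Finset.mem_range] at hp
    exact integral_mul_mul_mul_eq_zero_of_fourwise hmeas hsq hmean hindep
      hp.2.2.ne hp.2.1.ne hp.1.ne
  · intro p _
    exact .of_bound (by fun_prop) 1 (ae_of_all _ fun ω => by simp [abs_eq_one_of_sq_eq_one, hsq])

theorem integral_sum_range_sq (hmeas : ∀ i, Measurable (X i))
    (hsq : ∀ i ω, X i ω ^ 2 = 1) (hmean : ∀ i, μ[X i] = 0)
    (hindep : ∀ s : Finset ℕ, s.card ≤ 4 → iIndepFun (fun i : s => X i) μ) (n : ℕ) :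
    ∫ ω, (∑ i ∈ Finset.range n, X i ω) ^ 2 ∂μ = n := by
  induction n with
  | zero => simp
  | succ n ih =>
    set S := fun ω => ∑ i ∈ Finset.range n, X i ω
    have hexp : ∀ ω, (∑ i ∈ Finset.range (n + 1), X i ω) ^ 2 =
        S ω ^ 2 + 2 * (S ω * X n ω) + 1 := by
      intro ω
      rw [Finset.sum_range_succ]
      linear_combination hsq n ω
    have hS2 : Integrable (fun ω => S ω ^ 2) μ := integrable_sum_range_pow hmeas hsq n 2
    have hSX : Integrable (fun ω => S ω * X n ω) μ := by
      simpa using integrable_sum_range_pow_mul hmeas hsq n 1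
    simp_rw [hexp]
    rw [integral_add, integral_add, integral_const_mul, ih,
      integral_sum_range_mul_eq_zero hmeas hsq hmean hindep]
    · simp
    all_goals fun_prop

theorem integral_sum_range_pow_four (hmeas : ∀ i, Measurable (X i))
    (hsq : ∀ i ω, X i ω ^ 2 = 1) (hmean : ∀ i, μ[X i] = 0)
    (hindep : ∀ s : Finset ℕ, s.card ≤ 4 → iIndepFun (fun i : s => X i) μ) (n : ℕ) :
    ∫ ω, (∑ i ∈ Finset.range n, X i ω) ^ 4 ∂μ = 3 * (n : ℝ) ^ 2 - 2 * n := by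
  induction n with
  | zero => simp
  | succ n ih =>
    set S := fun ω => ∑ i ∈ Finset.range n, X i ω
    have hexp : ∀ ω, (∑ i ∈ Finset.range (n + 1), X i ω) ^ 4 =
        S ω ^ 4 + 4 * (S ω ^ 3 * X n ω) + 6 * S ω ^ 2 + 4 * (S ω * X n ω) + 1 := by
      intro ω
      rw [Finset.sum_range_succ]
      linear_combination (6 * S ω ^ 2 + 4 * S ω * X n ω + X n ω ^ 2 + 1) * hsq n ω
    have hS4 : Integrable (fun ω => S ω ^ 4) μ := integrable_sum_range_pow hmeas hsq n 4
    have hS2 : Integrable (fun ω => S ω ^ 2) μ := integrable_sum_range_pow hmeas hsq n 2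
    have hS3X : Integrable (fun ω => S ω ^ 3 * X n ω) μ :=
      integrable_sum_range_pow_mul hmeas hsq n 3
    have hSX : Integrable (fun ω => S ω * X n ω) μ := by
      simpa using integrable_sum_range_pow_mul hmeas hsq n 1
    simp_rw [hexp]
    rw [integral_add, integral_add, integral_add, integral_add, integral_const_mul,
      integral_const_mul, integral_const_mul, ih, integral_sum_range_sq hmeas hsq hmean hindep,
      integral_sum_range_pow_three_mul_eq_zero hmeas hsq hmean hindep,
      integral_sum_range_mul_eq_zero hmeas hsq hmean hindep]
    · simp
      ring
    all_goals fun_prop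

theorem sub_sq_div_le_measureReal_lt_sq_sum_range (hmeas : ∀ i, Measurable (X i))
    (hsq : ∀ i ω, X i ω ^ 2 = 1) (hmean : ∀ i, μ[X i] = 0)
    (hindep : ∀ s : Finset ℕ, s.card ≤ 4 → iIndepFun (fun i : s => X i) μ)
    {M : ℝ} (hM : 0 ≤ M) {n : ℕ} (hMn : M ≤ n) :
    ((n : ℝ) - M) ^ 2 / (3 * (n : ℝ) ^ 2 - 2 * n) ≤
      μ.real {ω | M < (∑ i ∈ Finset.range n, X i ω) ^ 2} := by
  have hZ : MemLp (fun ω => (∑ i ∈ Finset.range n, X i ω) ^ 2) 2 μ :=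
    (memLp_two_iff_integrable_sq (by fun_prop)).2
      (by simpa only [← pow_mul] using integrable_sum_range_pow hmeas hsq n 4)
  have h := paley_zygmund (by fun_prop) hZ hM
    (by rwa [integral_sum_range_sq hmeas hsq hmean hindep])
  simp_rw [← pow_mul] at h
  rwa [integral_sum_range_sq hmeas hsq hmean hindep,
    integral_sum_range_pow_four hmeas hsq hmean hindep] at h

end Moments

end

theorem tendsto_sub_sq_div_three_mul_sq_sub (M : ℝ) :
    Tendsto (fun n : ℕ => ((n : ℝ) - M) ^ 2 / (3 * (n : ℝ) ^ 2 - 2 * n)) atTop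
      (𝓝 (1 / 3)) := by
  have h := (((tendsto_const_nhds (x := (1 : ℝ))).sub
    (tendsto_const_div_atTop_nhds_zero_nat M)).pow 2).div
    (tendsto_const_nhds.sub (tendsto_const_div_atTop_nhds_zero_nat 2))
    (by norm_num : (3 : ℝ) - 0 ≠ 0)
  rw [sub_zero, sub_zero, one_pow] at h
  refine h.congr' ?_
  filter_upwards [eventually_ge_atTop 1] with n hn
  have hn : (1 : ℝ) ≤ n := by exact_mod_cast hn
  have h3 : (3 : ℝ) - 2 / n ≠ 0 := by
    have : 2 / (n : ℝ) ≤ 2 := div_le_self zero_le_two hn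
    linarith
  have h3n : 3 * (n : ℝ) ^ 2 - 2 * n ≠ 0 := by nlinarith
  rw [Pi.div_apply, div_eq_div_iff h3 h3n]
  field_simp

/-- For a sequence of `4`-wise independent Rademacher variables with partial sums
`Sₙ`, for every `M > 0` and `n > M` one has
`P(Sₙ² > M) ≥ (n - M)² / (3n² - 2n)`; in particular
`liminfₙ P(Sₙ² > M) ≥ 1/3` for every fixed `M > 0`. -/
theorem fourwise_independent_fat_tail
    {Ω : Type*} [MeasurableSpace Ω] (μ : Measure Ω) [IsProbabilityMeasure μ]
    (X : ℕ → Ω → ℝ) (hmeas : ∀ i, Measurable (X i))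
    (hrange : ∀ i ω, X i ω = 1 ∨ X i ω = -1)
    (hdist : ∀ i, μ {ω | X i ω = 1} = 1/2)
    (h4indep : ∀ s : Finset ℕ, s.card ≤ 4 →
      iIndepFun (fun i : s => X i) μ) :
    (∀ M : ℝ, 0 < M → ∀ n : ℕ, M < n →
      ((n : ℝ) - M) ^ 2 / (3 * (n : ℝ) ^ 2 - 2 * n) ≤
        (μ {ω | M < (∑ i ∈ Finset.range n, X i ω) ^ 2}).toReal) ∧
    (∀ M : ℝ, 0 < M →
      (1 : ℝ) / 3 ≤
        liminf (fun n : ℕ =>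
          (μ {ω | M < (∑ i ∈ Finset.range n, X i ω) ^ 2}).toReal) atTop) := by
  have hsq : ∀ i ω, X i ω ^ 2 = 1 := fun i ω => sq_eq_one_iff.2 (hrange i ω)
  have hmean : ∀ i, μ[X i] = 0 := fun i =>
    integral_eq_zero_of_eq_one_or_eq_neg_one (hmeas i) (hrange i) (hdist i)
  have hbound : ∀ M : ℝ, 0 < M → ∀ n : ℕ, M < n →
      ((n : ℝ) - M) ^ 2 / (3 * (n : ℝ) ^ 2 - 2 * n) ≤
        (μ {ω | M < (∑ i ∈ Finset.range n, X i ω) ^ 2}).toReal := fun M hM n hMn =>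
    sub_sq_div_le_measureReal_lt_sq_sum_range hmeas hsq hmean h4indep hM.le hMn.le
  refine ⟨hbound, fun M hM => ?_⟩
  have hlim := tendsto_sub_sq_div_three_mul_sq_sub M
  calc (1 : ℝ) / 3
        = liminf (fun n : ℕ => ((n : ℝ) - M) ^ 2 / (3 * (n : ℝ) ^ 2 - 2 * n)) atTop :=
          hlim.liminf_eq.symm
    _ ≤ _ := by
      refine liminf_le_liminf ?_ hlim.isBoundedUnder_ge
        (isBoundedUnder_of ⟨1, fun n => measureReal_le_one⟩).isCoboundedUnder_ge
      filter_upwards [eventually_gt_atTop ⌈M⌉₊] with n hn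
      exact hbound M hM n ((Nat.le_ceil M).trans_lt (by exact_mod_cast hn))
end

section
/- There is no sequence X₁, X₂, … of 4-wise independent random variables taking values ±1 with probability 1/2 such that the partial sums S_n = ∑_{i=1}^n X_i are almost surely bounded (i.e., sup_n |S_n| < ∞ a.s. fails whenever the variables are 4-wise independent). -/
/-!
Four-wise independence is all that the second and fourth moments of the walk see, so, exactly as
for independent signs, `𝔼[S_n²] = n` and `𝔼[S_n⁴] = 3n² - 2n`. If `|S_n| ≤ C` held for all `n` on
an event `A`, then `𝔼[S_n²] ≤ C² + t·ℙ(Aᶜ) + 𝔼[S_n⁴]/(4t)` (take `t = n`) forces `ℙ(Aᶜ) ≥ 1/4`.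
Hence the walk is bounded with probability at most `3/4`.
-/

open MeasureTheory ProbabilityTheory Finset

def KWiseIndepFun {Ω ι β : Type*} [MeasurableSpace Ω] [MeasurableSpace β] (k : ℕ)
    (X : ι → Ω → β) (μ : Measure Ω) : Prop :=
  ∀ s : Finset ι, s.card ≤ k → iIndepFun (fun i : s => X i) μ

lemma abs_le_one_of_eq_one_or_eq_neg_one {x : ℝ} (h : x = 1 ∨ x = -1) : |x| ≤ 1 := by
  rcases h with rfl | rfl <;> simp

section KWise

variable {Ω ι : Type*} [MeasurableSpace Ω] {μ : Measure Ω} {X : ι → Ω → ℝ} {k : ℕ}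

lemma KWiseIndepFun.mono {l : ℕ} (h : KWiseIndepFun k X μ) (hlk : l ≤ k) :
    KWiseIndepFun l X μ :=
  fun s hs => h s (hs.trans hlk)

lemma KWiseIndepFun.indepFun_restrict (h : KWiseIndepFun k X μ)
    (hmeas : ∀ i, Measurable (X i)) {S : Finset ι} {m : ι} (hm : m ∉ S) (hcard : S.card < k) :
    IndepFun (fun ω (i : S) => X i ω) (X m) μ := by
  classical
  have hs : (insert m S).card ≤ k := (card_insert_le m S).trans hcard
  refine ((h _ hs).indepFun_finset ((univ : Finset (insert m S : Finset ι)).filter (·.1 ∈ S))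
    {⟨m, mem_insert_self m S⟩} (by simp [disjoint_singleton_right, hm]) (fun i => hmeas i)).comp
    (φ := fun v (i : S) => v ⟨⟨i, mem_insert_of_mem i.2⟩, by simp⟩)
    (ψ := fun w => w ⟨_, mem_singleton_self _⟩) ?_ ?_
  · exact measurable_pi_lambda _ fun i => measurable_pi_apply _
  · exact measurable_pi_apply _

lemma KWiseIndepFun.integral_prod_mul_eq_zero (h : KWiseIndepFun k X μ)
    (hmeas : ∀ i, Measurable (X i)) {m : ι} (hmean : ∫ ω, X m ω ∂μ = 0)
    {r : ℕ} (hr : r < k) {p : Fin r → ι} (hp : ∀ t, p t ≠ m) :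
    ∫ ω, (∏ t, X (p t) ω) * X m ω ∂μ = 0 := by
  classical
  have hmS : m ∉ univ.image p := by simpa using hp
  have hind := (h.indepFun_restrict hmeas hmS ((card_image_le.trans (by simp)).trans_lt hr)).comp
    (φ := fun v => ∏ t, v ⟨p t, mem_image_of_mem p (mem_univ t)⟩) (ψ := id)
    (Finset.measurable_prod _ fun t _ => measurable_pi_apply _) measurable_id
  simpa [hmean] using hind.integral_mul_eq_mul_integral
    (Finset.measurable_prod _ fun t _ => hmeas (p t)).aestronglyMeasurable
    (hmeas m).aestronglyMeasurable

variable [IsFiniteMeasure μ]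

lemma integrable_sum_pow (hmeas : ∀ i, Measurable (X i)) (hbdd : ∀ i ω, |X i ω| ≤ 1)
    (s : Finset ι) (a : ℕ) : Integrable (fun ω => (∑ i ∈ s, X i ω) ^ a) μ := by
  refine Integrable.of_bound (by fun_prop) ((s.card : ℝ) ^ a) (ae_of_all _ fun ω => ?_)
  rw [Real.norm_eq_abs, abs_pow]
  gcongr
  exact (abs_sum_le_sum_abs _ _).trans (by simpa using sum_le_sum fun i _ => hbdd i ω)

lemma integrable_sum_pow_mul (hmeas : ∀ i, Measurable (X i)) (hbdd : ∀ i ω, |X i ω| ≤ 1)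
    (s : Finset ι) (a : ℕ) (m : ι) : Integrable (fun ω => (∑ i ∈ s, X i ω) ^ a * X m ω) μ :=
  (integrable_sum_pow hmeas hbdd s a).mul_bdd (hmeas m).aestronglyMeasurable
    (ae_of_all _ fun ω => (Real.norm_eq_abs _).trans_le (hbdd m ω))

lemma KWiseIndepFun.integral_sum_pow_mul_eq_zero (h : KWiseIndepFun k X μ)
    (hmeas : ∀ i, Measurable (X i)) (hbdd : ∀ i ω, |X i ω| ≤ 1) {m : ι}
    (hmean : ∫ ω, X m ω ∂μ = 0) {r : ℕ} (hr : r < k) {s : Finset ι} (hm : m ∉ s) :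
    ∫ ω, (∑ i ∈ s, X i ω) ^ r * X m ω ∂μ = 0 := by
  simp_rw [sum_pow', sum_mul]
  rw [integral_finsetSum]
  · exact sum_eq_zero fun p hp => h.integral_prod_mul_eq_zero hmeas hmean hr
      fun t hpt => hm (hpt ▸ Fintype.mem_piFinset.mp hp t)
  · refine fun p _ => Integrable.of_bound (by fun_prop) 1 (ae_of_all _ fun ω => ?_)
    rw [Real.norm_eq_abs, abs_mul, abs_prod]
    exact mul_le_one₀ (prod_le_one (fun _ _ => abs_nonneg _) fun t _ => hbdd _ _)
      (abs_nonneg _) (hbdd m ω)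

end KWise

section Probability

variable {Ω : Type*} [MeasurableSpace Ω] {μ : Measure Ω} [IsProbabilityMeasure μ]

lemma integral_eq_zero_of_rademacher {f : Ω → ℝ} (hf : Measurable f)
    (hsign : ∀ ω, f ω = 1 ∨ f ω = -1) (hhalf : μ {ω | f ω = 1} = 1 / 2) : ∫ ω, f ω ∂μ = 0 := by
  have hA : MeasurableSet {ω | f ω = 1} := hf (measurableSet_singleton 1)
  have hpt : ∀ ω, f ω = {ω | f ω = 1}.indicator (fun _ => (2 : ℝ)) ω - 1 := by
    intro ω
    rcases hsign ω with h | h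
    · rw [Set.indicator_of_mem (by exact h), h]; norm_num
    · rw [Set.indicator_of_notMem (by simp [h]; norm_num), h]; norm_num
  rw [integral_congr_ae (ae_of_all _ hpt),
    integral_sub ((integrable_const 2).indicator hA) (integrable_const 1),
    integral_indicator_const _ hA]
  simp [measureReal_def, hhalf]

lemma integral_le_of_le_on {Z : Ω → ℝ} (hZ : Integrable Z μ)
    (hZ2 : Integrable (fun ω => Z ω ^ 2) μ) {A : Set Ω} (hA : MeasurableSet A) {c : ℝ}
    (hc : 0 ≤ c) (hle : ∀ ω ∈ A, Z ω ≤ c) {t : ℝ} (ht : 0 < t) :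
    ∫ ω, Z ω ∂μ ≤ c + t * μ.real Aᶜ + (∫ ω, Z ω ^ 2 ∂μ) / (4 * t) := by
  have hpt : ∀ ω, Z ω ≤ c + t * Aᶜ.indicator 1 ω + Z ω ^ 2 / (4 * t) := by
    intro ω
    have hsq : 0 ≤ Z ω ^ 2 / (4 * t) := by positivity
    by_cases hω : ω ∈ A
    · simp only [Set.indicator_of_notMem (Set.notMem_compl_iff.mpr hω), mul_zero, add_zero]
      linarith [hle ω hω]
    · have hamgm : Z ω ≤ t + Z ω ^ 2 / (4 * t) := by
        rw [← sub_nonneg]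
        have : t + Z ω ^ 2 / (4 * t) - Z ω = (Z ω - 2 * t) ^ 2 / (4 * t) := by
          field_simp; ring
        rw [this]; positivity
      simp only [Set.indicator_of_mem (Set.mem_compl hω), Pi.one_apply, mul_one]
      linarith
  have hint : Integrable (fun ω => t * Aᶜ.indicator 1 ω) μ :=
    ((integrable_const 1).indicator hA.compl).const_mul t
  calc ∫ ω, Z ω ∂μ ≤ ∫ ω, (c + t * Aᶜ.indicator 1 ω + Z ω ^ 2 / (4 * t)) ∂μ :=
        integral_mono hZ (by fun_prop) hpt
    _ = c + t * μ.real Aᶜ + (∫ ω, Z ω ^ 2 ∂μ) / (4 * t) := by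
        rw [integral_add (by fun_prop) (by fun_prop), integral_add (by fun_prop) hint,
          integral_const_mul, integral_indicator_one hA.compl, integral_div]
        simp

end Probability

section SignWalk

variable {Ω ι : Type*} [MeasurableSpace Ω] {μ : Measure Ω} [IsProbabilityMeasure μ]
  {X : ι → Ω → ℝ}

lemma KWiseIndepFun.integral_sum_sq (h : KWiseIndepFun 2 X μ) (hmeas : ∀ i, Measurable (X i))
    (hsign : ∀ i ω, X i ω = 1 ∨ X i ω = -1) (hmean : ∀ i, ∫ ω, X i ω ∂μ = 0) (s : Finset ι) :
    ∫ ω, (∑ i ∈ s, X i ω) ^ 2 ∂μ = s.card := by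
  classical
  have hbdd i ω := abs_le_one_of_eq_one_or_eq_neg_one (hsign i ω)
  induction s using Finset.induction_on with
  | empty => simp
  | insert m s hm ih =>
    have hcross := h.integral_sum_pow_mul_eq_zero hmeas hbdd (hmean m) one_lt_two hm
    have hexpand : ∀ ω, (∑ i ∈ insert m s, X i ω) ^ 2
        = (∑ i ∈ s, X i ω) ^ 2 + 2 * ((∑ i ∈ s, X i ω) ^ 1 * X m ω) + 1 := fun ω => by
      rw [sum_insert hm]
      rcases hsign m ω with h | h <;> rw [h] <;> ring
    simp_rw [hexpand]
    have := integrable_sum_pow (μ := μ) hmeas hbdd s 2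
    have := integrable_sum_pow_mul (μ := μ) hmeas hbdd s 1 m
    rw [integral_add (by fun_prop) (by fun_prop), integral_add (by fun_prop) (by fun_prop),
      integral_const_mul, ih, hcross, card_insert_of_notMem hm]
    simp

lemma KWiseIndepFun.integral_sum_pow_four (h : KWiseIndepFun 4 X μ)
    (hmeas : ∀ i, Measurable (X i)) (hsign : ∀ i ω, X i ω = 1 ∨ X i ω = -1)
    (hmean : ∀ i, ∫ ω, X i ω ∂μ = 0) (s : Finset ι) :
    ∫ ω, (∑ i ∈ s, X i ω) ^ 4 ∂μ = 3 * (s.card : ℝ) ^ 2 - 2 * s.card := by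
  classical
  have hbdd i ω := abs_le_one_of_eq_one_or_eq_neg_one (hsign i ω)
  induction s using Finset.induction_on with
  | empty => simp
  | insert m s hm ih =>
    have hcube := h.integral_sum_pow_mul_eq_zero hmeas hbdd (hmean m) (r := 3) (by norm_num) hm
    have hlin := h.integral_sum_pow_mul_eq_zero hmeas hbdd (hmean m) (r := 1) (by norm_num) hm
    have hsq := (h.mono (by norm_num)).integral_sum_sq hmeas hsign hmean s
    have hexpand : ∀ ω, (∑ i ∈ insert m s, X i ω) ^ 4
        = (∑ i ∈ s, X i ω) ^ 4 + 4 * ((∑ i ∈ s, X i ω) ^ 3 * X m ω)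
          + 6 * (∑ i ∈ s, X i ω) ^ 2 + 4 * ((∑ i ∈ s, X i ω) ^ 1 * X m ω) + 1 := fun ω => by
      rw [sum_insert hm]
      rcases hsign m ω with h | h <;> rw [h] <;> ring
    simp_rw [hexpand]
    have := integrable_sum_pow (μ := μ) hmeas hbdd s 4
    have := integrable_sum_pow (μ := μ) hmeas hbdd s 2
    have := integrable_sum_pow_mul (μ := μ) hmeas hbdd s 3 m
    have := integrable_sum_pow_mul (μ := μ) hmeas hbdd s 1 m
    rw [integral_add (by fun_prop) (by fun_prop), integral_add (by fun_prop) (by fun_prop),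
      integral_add (by fun_prop) (by fun_prop), integral_add (by fun_prop) (by fun_prop),
      integral_const_mul, integral_const_mul, integral_const_mul, ih, hcube, hlin, hsq,
      card_insert_of_notMem hm]
    simp only [mul_zero, add_zero, integral_const, probReal_univ, smul_eq_mul, mul_one]
    push_cast
    ring

end SignWalk

section Exit

variable {Ω : Type*} [MeasurableSpace Ω] {μ : Measure Ω} [IsProbabilityMeasure μ]
  {X : ℕ → Ω → ℝ}

lemma KWiseIndepFun.measure_forall_abs_sum_range_le (h : KWiseIndepFun 4 X μ)
    (hmeas : ∀ i, Measurable (X i)) (hsign : ∀ i ω, X i ω = 1 ∨ X i ω = -1)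
    (hmean : ∀ i, ∫ ω, X i ω ∂μ = 0) (C : ℝ) :
    μ {ω | ∀ n, |∑ i ∈ range n, X i ω| ≤ C} ≤ 3 / 4 := by
  set A := {ω | ∀ n, |∑ i ∈ range n, X i ω| ≤ C}
  have hA : MeasurableSet A := by
    simp only [A, Set.ofPred_forall]
    exact MeasurableSet.iInter fun n => measurableSet_le (by fun_prop) measurable_const
  by_contra! hlt
  have hp : μ.real Aᶜ < 1 / 4 := by
    have : (3 / 4 : ℝ) < μ.real A := by
      simpa [measureReal_def] using ENNReal.toReal_strict_mono (measure_ne_top μ A) hlt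
    rw [measureReal_compl hA, probReal_univ]
    linarith
  have hbdd i ω := abs_le_one_of_eq_one_or_eq_neg_one (hsign i ω)
  have hC : ∀ n : ℕ, 0 < n → (n : ℝ) * (1 / 4 - μ.real Aᶜ) ≤ C ^ 2 := by
    intro n hn
    have hn' : (0 : ℝ) < n := Nat.cast_pos.mpr hn
    have hmoment := integral_le_of_le_on (μ := μ) (integrable_sum_pow hmeas hbdd (range n) 2)
      (by simpa [← pow_mul] using integrable_sum_pow hmeas hbdd (range n) 4) hA (sq_nonneg C)
      (fun ω hω => sq_le_sq' (abs_le.mp (hω n)).1 (abs_le.mp (hω n)).2) hn'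
    simp only [← pow_mul, (h.mono (by norm_num)).integral_sum_sq hmeas hsign hmean,
      h.integral_sum_pow_four hmeas hsign hmean, card_range] at hmoment
    have hfourth : (3 * (n : ℝ) ^ 2 - 2 * n) / (4 * n) ≤ 3 / 4 * n := by
      rw [div_le_iff₀ (by positivity)]; nlinarith
    nlinarith
  obtain ⟨n, hn⟩ := exists_nat_gt (C ^ 2 / (1 / 4 - μ.real Aᶜ))
  have hCn := hC n (by exact_mod_cast (div_nonneg (sq_nonneg C) (by linarith)).trans_lt hn)
  rw [div_lt_iff₀ (by linarith)] at hn
  linarith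

end Exit

/-- There is no sequence of `4`-wise independent Rademacher variables whose
partial sums are almost surely bounded. -/
theorem no_bounded_fourwise_independent_walk
    {Ω : Type*} [MeasurableSpace Ω] (μ : Measure Ω) [IsProbabilityMeasure μ]
    (X : ℕ → Ω → ℝ) (hmeas : ∀ i, Measurable (X i))
    (hrange : ∀ i ω, X i ω = 1 ∨ X i ω = -1)
    (hdist : ∀ i, μ {ω | X i ω = 1} = 1/2)
    (h4indep : ∀ s : Finset ℕ, s.card ≤ 4 →
      iIndepFun (fun i : s => X i) μ) :
    ¬ (μ {ω | ∃ C : ℝ, ∀ n : ℕ, |∑ i ∈ Finset.range n, X i ω| ≤ C} = 1) := by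
  intro hbounded
  have hmean i := integral_eq_zero_of_rademacher (hmeas i) (hrange i) (hdist i)
  have hunion : {ω | ∃ C : ℝ, ∀ n : ℕ, |∑ i ∈ range n, X i ω| ≤ C}
      = ⋃ N : ℕ, {ω | ∀ n, |∑ i ∈ range n, X i ω| ≤ N} := by
    ext ω
    simp only [Set.mem_ofPred_eq, Set.mem_iUnion]
    exact ⟨fun ⟨C, hC⟩ => ⟨⌈C⌉₊, fun n => (hC n).trans (Nat.le_ceil C)⟩,
      fun ⟨N, hN⟩ => ⟨N, hN⟩⟩
  have hmono : Monotone fun N : ℕ => {ω | ∀ n, |∑ i ∈ range n, X i ω| ≤ N} :=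
    fun a b hab ω hω n => (hω n).trans (Nat.cast_le.mpr hab)
  have hle : μ {ω | ∃ C : ℝ, ∀ n : ℕ, |∑ i ∈ range n, X i ω| ≤ C} ≤ 3 / 4 := by
    rw [hunion, hmono.measure_iUnion]
    exact iSup_le fun N =>
      KWiseIndepFun.measure_forall_abs_sum_range_le h4indep hmeas hrange hmean N
  have h34 : (3 / 4 : ENNReal) < 1 := by
    rw [ENNReal.div_lt_iff (by norm_num) (by norm_num)]; norm_num
  exact h34.not_ge (hbounded ▸ hle)
end

section
/- There exists a sequence of random variables X₁, X₂, … taking values ±1 with probability 1/2 each, pairwise independent, such that the partial sums S_n = ∑_{i=1}^n X_i are almost surely bounded: P(sup_n |S_n| < ∞) = 1. -/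
/-!
Take the Walsh system on the Cantor group `(ℤ/2)^ℕ` with its Haar measure,
`w_n ω = (-1)^(∑_{k ∈ bits n} ω k)`, and `X_i = w_(i+1)`. For distinct nonzero `a, b` the
homomorphism `ω ↦ (⟨a, ω⟩, ⟨b, ω⟩)` onto `(ℤ/2)²` is surjective, and translation invariance of
Haar measure makes its law uniform; hence `w_a, w_b` are independent fair signs.
The partial sums are Walsh–Dirichlet kernels, which satisfy
`D_(2^m + r) = D_(2^m) + r_m D_r` for `r ≤ 2^m` and `D_(2^m) = ∏_{k<m} (1 + r_k)`, where
`r_k ω = w_(2^k) ω = (-1)^(ω k)`. If `ω K = 1` the products vanish for `m > K`, so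
`|D_N ω| ≤ 2^(K+1)` for all `N`; and `ω = 0` is a null set.
-/

open MeasureTheory ProbabilityTheory Finset Filter Topology
open scoped ENNReal

section Uniform

variable {G : Type*} [AddGroup G] [MeasurableSpace G] [MeasurableAdd G]
  {μ : Measure G} [IsProbabilityMeasure μ] [μ.IsAddLeftInvariant]
  {V : Type*} [AddGroup V] [Fintype V] [MeasurableSpace V] [MeasurableSingletonClass V]

theorem measure_preimage_singleton_of_surjective {φ : G →+ V} (hφ : Measurable φ)
    (hs : Function.Surjective φ) (v : V) :
    μ (φ ⁻¹' {v}) = (Fintype.card V : ℝ≥0∞)⁻¹ := by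
  have fiber_eq (u : V) : μ (φ ⁻¹' {u}) = μ (φ ⁻¹' {v}) := by
    obtain ⟨δ, hδ⟩ := hs (v - u)
    have : (δ + ·) ⁻¹' (φ ⁻¹' {v}) = φ ⁻¹' {u} := by
      ext ω
      simpa [hδ, sub_eq_add_neg, add_assoc] using neg_add_eq_zero.trans eq_comm
    rw [← this, measure_preimage_add]
  have hsum : ∑ u : V, μ (φ ⁻¹' {u}) = 1 := by
    rw [sum_measure_preimage_singleton _ fun u _ ↦ hφ (measurableSet_singleton u)]
    simp
  rw [Finset.sum_congr rfl fun u _ ↦ fiber_eq u, sum_const, card_univ, nsmul_eq_mul] at hsum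
  exact (ENNReal.eq_inv_of_mul_eq_one_left (by rwa [mul_comm]))

theorem indepFun_of_surjective_prod {W : Type*} [AddGroup W] [Fintype W] [MeasurableSpace W]
    [MeasurableSingletonClass W] {φ : G →+ V} {ψ : G →+ W} (hφ : Measurable φ)
    (hψ : Measurable ψ) (hs : Function.Surjective (φ.prod ψ)) : IndepFun φ ψ μ := by
  have hφs : Function.Surjective φ := fun v ↦ (hs (v, 0)).imp fun _ h ↦ congrArg Prod.fst h
  have hψs : Function.Surjective ψ := fun w ↦ (hs (0, w)).imp fun _ h ↦ congrArg Prod.snd h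
  rw [indepFun_iff_map_prod_eq_prod_map_map hφ.aemeasurable hψ.aemeasurable]
  refine Measure.ext_of_singleton fun ⟨v, w⟩ ↦ ?_
  have hpair : Measurable (φ.prod ψ) := hφ.prodMk hψ
  change μ.map (φ.prod ψ) _ = _
  rw [Measure.map_apply hpair (measurableSet_singleton _), ← Set.singleton_prod_singleton,
    Measure.prod_prod, Measure.map_apply hφ (measurableSet_singleton _),
    Measure.map_apply hψ (measurableSet_singleton _), Set.singleton_prod_singleton,
    measure_preimage_singleton_of_surjective hpair hs,
    measure_preimage_singleton_of_surjective hφ hφs, measure_preimage_singleton_of_surjective hψ hψs,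
    Fintype.card_prod, Nat.cast_mul,
    ENNReal.mul_inv (by simp) (by simp)]

end Uniform

theorem AddMonoidHom.prod_surjective_of_zmod {G : Type*} [AddCommGroup G] {m n : ℕ} [NeZero m]
    [NeZero n] {φ : G →+ ZMod m} {ψ : G →+ ZMod n} {g₁ g₂ : G} (h₁ : φ g₁ = 1) (h₁' : ψ g₁ = 0)
    (h₂ : ψ g₂ = 1) : Function.Surjective (φ.prod ψ) := by
  rintro ⟨u, v⟩
  refine ⟨(u - v.val * φ g₂).val • g₁ + v.val • g₂, ?_⟩
  simp [h₁, h₁', h₂]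

instance : TopologicalSpace (ZMod 2) := ⊥
instance : DiscreteTopology (ZMod 2) := ⟨rfl⟩

namespace Walsh

abbrev CantorGroup : Type := ℕ → ZMod 2

noncomputable def haar : Measure CantorGroup := Measure.addHaarMeasure ⊤

instance : IsProbabilityMeasure haar :=
  ⟨Measure.addHaarMeasure_self (K₀ := ⊤)⟩

instance : haar.IsAddHaarMeasure := by unfold haar; infer_instance

-- `0` is not isolated, so the Haar measure has no atoms.
instance : (𝓝[≠] (0 : CantorGroup)).NeBot := by
  refine mem_closure_iff_nhdsWithin_neBot.1 (mem_closure_of_tendsto (f := fun n ↦ Pi.single n 1)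
    (b := atTop) ?_ (Eventually.of_forall fun n ↦ ?_))
  · refine tendsto_pi_nhds.2 fun k ↦ tendsto_const_nhds.congr' ?_
    filter_upwards [eventually_gt_atTop k] with n hn
    simp [hn.ne]
  · simp

def pairing (n : ℕ) : CantorGroup →+ ZMod 2 where
  toFun ω := ∑ k ∈ n.bitIndices.toFinset, ω k
  map_zero' := by simp
  map_add' ω δ := by simp [sum_add_distrib]

theorem measurable_pairing (n : ℕ) : Measurable (pairing n) := by
  simp only [pairing, AddMonoidHom.coe_mk, ZeroHom.coe_mk]; fun_prop

theorem pairing_single (n k : ℕ) (x : ZMod 2) :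
    pairing n (Pi.single k x) = if n.testBit k then x else 0 := by
  simp [pairing, Pi.single_apply]

theorem toFinset_bitIndices_two_pow_add {m n : ℕ} (h : n < 2 ^ m) :
    (2 ^ m + n).bitIndices.toFinset = insert m n.bitIndices.toFinset := by
  ext j
  have hbit := Nat.testBit_two_pow_mul_add 1 h j
  rw [mul_one] at hbit
  by_cases hj : j < m
  · simp [hbit, hj, hj.ne]
  · have hn : n.testBit j = false :=
      Nat.testBit_lt_two_pow (h.trans_le (Nat.pow_le_pow_right two_pos (not_lt.1 hj)))
    simp [hbit, hj, hn, Nat.testBit_one_eq_true_iff_self_eq_zero]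
    omega

theorem pairing_two_pow_add {m n : ℕ} (h : n < 2 ^ m) (ω : CantorGroup) :
    pairing (2 ^ m + n) ω = ω m + pairing n ω := by
  have : m ∉ n.bitIndices.toFinset := by simpa using Nat.testBit_lt_two_pow h
  simp only [pairing, AddMonoidHom.coe_mk, ZeroHom.coe_mk, toFinset_bitIndices_two_pow_add h,
    sum_insert this]

theorem pairing_zero (ω : CantorGroup) : pairing 0 ω = 0 := by simp [pairing]

theorem pairing_surjective {n : ℕ} (hn : n ≠ 0) : Function.Surjective (pairing n) := by
  obtain ⟨k, hk⟩ := Nat.exists_testBit_of_ne_zero hn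
  exact fun x ↦ ⟨Pi.single k x, by simp [pairing_single, hk]⟩

theorem indepFun_pairing {a b k : ℕ} (hb : b ≠ 0) (hka : a.testBit k) (hkb : b.testBit k = false) :
    IndepFun (pairing a) (pairing b) haar := by
  obtain ⟨j, hj⟩ := Nat.exists_testBit_of_ne_zero hb
  refine indepFun_of_surjective_prod (measurable_pairing a) (measurable_pairing b) ?_
  exact AddMonoidHom.prod_surjective_of_zmod (g₁ := Pi.single k 1) (g₂ := Pi.single j 1)
    (by simp [pairing_single, hka]) (by simp [pairing_single, hkb]) (by simp [pairing_single, hj])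

theorem zmod_two_eq_zero_or_eq_one (x : ZMod 2) : x = 0 ∨ x = 1 := by
  revert x; decide

def sign (x : ZMod 2) : ℝ := (-1) ^ x.val

theorem sign_add (x y : ZMod 2) : sign (x + y) = sign x * sign y := by
  simp [sign, ZMod.val_add, pow_add, ← neg_one_pow_eq_pow_mod_two]

theorem sign_eq_one_iff {x : ZMod 2} : sign x = 1 ↔ x = 0 := by
  rcases zmod_two_eq_zero_or_eq_one x with rfl | rfl <;> norm_num [sign, ZMod.val_one]

theorem sign_of_ne_zero {x : ZMod 2} (hx : x ≠ 0) : sign x = -1 := by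
  rcases zmod_two_eq_zero_or_eq_one x with rfl | rfl <;> simp_all [sign, ZMod.val_one]

theorem abs_sign (x : ZMod 2) : |sign x| = 1 := by simp [sign]

def walsh (n : ℕ) (ω : CantorGroup) : ℝ := sign (pairing n ω)

theorem measurable_walsh (n : ℕ) : Measurable (walsh n) :=
  (measurable_of_finite sign).comp (measurable_pairing n)

theorem walsh_eq_one_or_eq_neg_one (n : ℕ) (ω : CantorGroup) : walsh n ω = 1 ∨ walsh n ω = -1 :=
  neg_one_pow_eq_or ℝ _

theorem haar_walsh_eq_one {n : ℕ} (hn : n ≠ 0) : haar {ω | walsh n ω = 1} = 1 / 2 := by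
  have : {ω | walsh n ω = 1} = pairing n ⁻¹' {0} := by
    ext ω; simp [walsh, sign_eq_one_iff]
  rw [this, measure_preimage_singleton_of_surjective (measurable_pairing n) (pairing_surjective hn)]
  simp

theorem indepFun_walsh {a b : ℕ} (ha : a ≠ 0) (hb : b ≠ 0) (hab : a ≠ b) :
    IndepFun (walsh a) (walsh b) haar := by
  obtain ⟨k, hk⟩ := Nat.exists_testBit_ne_of_ne hab
  have : IndepFun (pairing a) (pairing b) haar := by
    cases hka : a.testBit k
    · exact (indepFun_pairing ha (by simpa [hka] using hk) hka).symm
    · exact indepFun_pairing hb hka (by simpa [hka] using hk)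
  exact this.comp (measurable_of_finite sign) (measurable_of_finite sign)

def dirichletKernel (N : ℕ) (ω : CantorGroup) : ℝ := ∑ n ∈ range N, walsh n ω

theorem walsh_zero (ω : CantorGroup) : walsh 0 ω = 1 := by simp [walsh, pairing_zero, sign]

theorem walsh_two_pow_add {m n : ℕ} (h : n < 2 ^ m) (ω : CantorGroup) :
    walsh (2 ^ m + n) ω = sign (ω m) * walsh n ω := by
  rw [walsh, pairing_two_pow_add h, sign_add, walsh]

theorem dirichletKernel_two_pow_add {m r : ℕ} (h : r ≤ 2 ^ m) (ω : CantorGroup) :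
    dirichletKernel (2 ^ m + r) ω =
      dirichletKernel (2 ^ m) ω + sign (ω m) * dirichletKernel r ω := by
  rw [dirichletKernel, sum_range_add, dirichletKernel, dirichletKernel, mul_sum]
  exact congrArg _ (sum_congr rfl fun n hn ↦ walsh_two_pow_add ((mem_range.1 hn).trans_le h) ω)

theorem dirichletKernel_two_pow (m : ℕ) (ω : CantorGroup) :
    dirichletKernel (2 ^ m) ω = ∏ k ∈ range m, (1 + sign (ω k)) := by
  induction m with
  | zero => simp [dirichletKernel, walsh_zero]
  | succ m ih =>
    rw [pow_succ, mul_two, dirichletKernel_two_pow_add le_rfl, prod_range_succ, ← ih]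
    ring

theorem abs_dirichletKernel_le_self (N : ℕ) (ω : CantorGroup) : |dirichletKernel N ω| ≤ N :=
  (abs_sum_le_sum_abs _ _).trans_eq (by simp [walsh, abs_sign])

theorem abs_dirichletKernel_le {K : ℕ} {ω : CantorGroup} (hK : ω K ≠ 0) (N : ℕ) :
    |dirichletKernel N ω| ≤ 2 ^ (K + 1) := by
  suffices ∀ m, ∀ N ≤ 2 ^ m, |dirichletKernel N ω| ≤ 2 ^ (K + 1) from
    this N N Nat.lt_two_pow_self.le
  have le_of_le (N : ℕ) (hN : N ≤ 2 ^ (K + 1)) : |dirichletKernel N ω| ≤ 2 ^ (K + 1) :=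
    (abs_dirichletKernel_le_self N ω).trans (by exact_mod_cast hN)
  intro m
  induction m with
  | zero => exact fun N hN ↦ le_of_le N (hN.trans Nat.one_le_two_pow)
  | succ m ih =>
    intro N hN
    rcases le_or_gt N (2 ^ m) with hNm | hNm
    · exact ih N hNm
    rcases le_or_gt m K with hmK | hKm
    · exact le_of_le N (hN.trans (Nat.pow_le_pow_right two_pos (by omega)))
    obtain ⟨r, rfl⟩ := Nat.exists_eq_add_of_le hNm.le
    have hr : r ≤ 2 ^ m := by rw [pow_succ] at hN; omega
    have hvanish : dirichletKernel (2 ^ m) ω = 0 := by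
      rw [dirichletKernel_two_pow]
      exact prod_eq_zero (mem_range.2 hKm) (by simp [sign_of_ne_zero hK])
    rw [dirichletKernel_two_pow_add hr, hvanish, zero_add, abs_mul, abs_sign, one_mul]
    exact ih r hr

theorem abs_sum_walsh_succ_le {K : ℕ} {ω : CantorGroup} (hK : ω K ≠ 0) (n : ℕ) :
    |∑ i ∈ range n, walsh (i + 1) ω| ≤ 2 ^ (K + 1) + 1 := by
  have : ∑ i ∈ range n, walsh (i + 1) ω = dirichletKernel (n + 1) ω - 1 := by
    rw [dirichletKernel, sum_range_succ', walsh_zero, add_sub_cancel_right]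
  rw [this]
  exact (abs_sub _ _).trans (by simpa using abs_dirichletKernel_le hK (n + 1))

end Walsh

/-- Theorem 1: there exists a sequence of pairwise independent Rademacher
variables whose partial sums are almost surely bounded. -/
theorem exists_pairwise_independent_bounded_walk :
    ∃ (Ω : Type) (_ : MeasurableSpace Ω) (μ : Measure Ω) (_ : IsProbabilityMeasure μ)
      (X : ℕ → Ω → ℝ),
      (∀ i, Measurable (X i)) ∧
      (∀ i ω, X i ω = 1 ∨ X i ω = -1) ∧
      (∀ i, μ {ω | X i ω = 1} = 1/2) ∧
      (∀ i j, i ≠ j → IndepFun (X i) (X j) μ) ∧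
      μ {ω | ∃ C : ℝ, ∀ n : ℕ, |∑ i ∈ Finset.range n, X i ω| ≤ C} = 1 := by
  open Walsh in
  refine ⟨CantorGroup, inferInstance, haar, inferInstance, fun i ↦ walsh (i + 1),
    fun i ↦ measurable_walsh _, fun i ↦ walsh_eq_one_or_eq_neg_one _,
    fun i ↦ haar_walsh_eq_one i.succ_ne_zero,
    fun i j hij ↦ indepFun_walsh i.succ_ne_zero j.succ_ne_zero (by omega), ?_⟩
  have hnonzero : haar {(0 : CantorGroup)}ᶜ = 1 :=
    (prob_compl_eq_one_iff (measurableSet_singleton 0)).2 (measure_singleton 0)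
  refine le_antisymm prob_le_one (hnonzero ▸ measure_mono fun ω hω ↦ ?_)
  obtain ⟨K, hK⟩ := Function.ne_iff.1 hω
  exact ⟨_, abs_sum_walsh_succ_le hK⟩
end

section
/- For the Gray walk S'_n = ∑_{i=0}^n X_i (with X_0 ≡ 1 and X_i = ∏_{j∈A_i} ξ_j, where A_i enumerates finite subsets of ℕ in infinite Gray code order and ξ_j are i.i.d. Rademacher), one has almost surely sup_n S'_n = −inf_n S'_n = 2^{J−1}, where J = min{j ≥ 1 : ξ_j = −1}. -/
open MeasureTheory ProbabilityTheory

/-!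
Write `T n = X_0 + ⋯ + X_{n-1}` (`grayWalk`), so that `S'_n = T (n + 1)`. Reflecting the Gray
code gives `A_{2^t + m} = A_{2^t - 1 - m} ∪ {t + 1}` for `m < 2^t`, hence
`T (2^t + m) = T (2^t) + ξ_{t+1} (T (2^t) - T (2^t - m))` for `m ≤ 2^t`.
With `J = t + 1`, all `X_i` with `i < 2^t` equal `1`, so the walk climbs to `2^t` at time `2^t`
and falls back to `0` at time `2^{t+1}`. From then on `T (2^s) = 0` for every `s > t`, and the
second half of each dyadic block retraces the first half with sign `-ξ_{s+1}`. Hence `|T| ≤ 2^t`,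
and `-2^t` is reached in the block following any `s > t` with `ξ_{s+1} = 1`; by the second
Borel–Cantelli lemma there are a.s. infinitely many such `s`.
-/

/-- The `i`-th word of the infinite (reflected binary) Gray code, viewed as a
finite subset of `{1, 2, 3, …}`: `j ∈ graySet i` iff the `(j-1)`-th bit of
`i XOR (i/2)` is `1` (so positions are indexed starting from `1`, as in the
paper). -/
def graySet (i : ℕ) : Finset ℕ :=
  (Finset.range (i + 2)).filter fun j => 1 ≤ j ∧ (i ^^^ (i >>> 1)).testBit (j - 1)

theorem Nat.testBit_two_pow_add {t m k : ℕ} (h : m < 2 ^ t) :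
    (2 ^ t + m).testBit k = if k < t then m.testBit k else decide (k = t) := by
  rcases lt_trichotomy k t with hk | rfl | hk
  · simp [Nat.testBit_two_pow_add_gt hk, hk]
  · simp [Nat.testBit_two_pow_add_eq, Nat.testBit_lt_two_pow h]
  · have : 2 ^ t + m < 2 ^ k :=
      calc 2 ^ t + m < 2 ^ (t + 1) := by rw [pow_succ]; omega
        _ ≤ 2 ^ k := Nat.pow_le_pow_right two_pos hk
    simp [Nat.testBit_lt_two_pow this, hk.not_gt, hk.ne']

def grayCode (i : ℕ) : ℕ := i ^^^ (i >>> 1)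

theorem grayCode_lt_two_pow {i t : ℕ} (h : i < 2 ^ t) : grayCode i < 2 ^ t :=
  Nat.xor_lt_two_pow h <| Nat.shiftRight_eq_div_pow i 1 ▸ (Nat.div_le_self _ _).trans_lt h

theorem grayCode_two_pow_add {t m : ℕ} (h : m < 2 ^ t) :
    grayCode (2 ^ t + m) = 2 ^ t ^^^ grayCode (2 ^ t - 1 - m) := by
  apply Nat.eq_of_testBit_eq
  intro k
  have hsub : ∀ k, (2 ^ t - 1 - m).testBit k = (decide (k < t) && !m.testBit k) := fun k => by
    rw [Nat.sub_sub, Nat.add_comm, Nat.testBit_two_pow_sub_succ h]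
  simp only [grayCode, Nat.testBit_xor, Nat.testBit_shiftRight, Nat.testBit_two_pow,
    Nat.testBit_two_pow_add h, hsub]
  rcases lt_trichotomy (k + 1) t with hk | hk | hk
  · simp [show k < t by omega, show 1 + k < t by omega, show t ≠ k by omega]
  · simp [show k < t by omega, show 1 + k = t by omega, show t ≠ k by omega]
  · rcases eq_or_ne k t with rfl | hne
    · simp
    · simp [show ¬ 1 + k < t by omega, show 1 + k ≠ t by omega, show ¬ k < t by omega, hne,
        hne.symm]

theorem mem_graySet {i j : ℕ} : j ∈ graySet i ↔ 1 ≤ j ∧ (grayCode i).testBit (j - 1) := by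
  refine ⟨fun hj => (Finset.mem_filter.1 hj).2, fun ⟨hj, hbit⟩ => ?_⟩
  have hlt : j - 1 < i + 1 := by
    by_contra! hi
    have : grayCode i < 2 ^ (j - 1) :=
      grayCode_lt_two_pow (Nat.lt_two_pow_self.trans_le (Nat.pow_le_pow_right two_pos (by omega)))
    simp [Nat.testBit_lt_two_pow this] at hbit
  exact Finset.mem_filter.2 ⟨Finset.mem_range.2 (by omega), hj, hbit⟩

theorem graySet_subset_Icc {i t : ℕ} (h : i < 2 ^ t) : graySet i ⊆ Finset.Icc 1 t := by
  intro j hj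
  obtain ⟨hj, hbit⟩ := mem_graySet.1 hj
  refine Finset.mem_Icc.2 ⟨hj, ?_⟩
  by_contra! hjt
  have : grayCode i < 2 ^ (j - 1) :=
    (grayCode_lt_two_pow h).trans_le (Nat.pow_le_pow_right two_pos (by omega))
  simp [Nat.testBit_lt_two_pow this] at hbit

theorem graySet_two_pow_add {t m : ℕ} (h : m < 2 ^ t) :
    graySet (2 ^ t + m) = insert (t + 1) (graySet (2 ^ t - 1 - m)) := by
  ext j
  rw [Finset.mem_insert, mem_graySet, mem_graySet, grayCode_two_pow_add h, Nat.testBit_xor,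
    Nat.testBit_two_pow]
  rcases eq_or_ne j (t + 1) with rfl | hj
  · simp [Nat.testBit_lt_two_pow (grayCode_lt_two_pow (Nat.sub_one_sub_lt_of_lt h))]
  · by_cases hj0 : 1 ≤ j
    · simp [hj, hj0, show t ≠ j - 1 by omega]
    · simp [hj, hj0]

section Walk

variable {R : Type*} [CommRing R] (ε : ℕ → R)

def grayTerm (i : ℕ) : R := ∏ j ∈ graySet i, ε j

def grayWalk (n : ℕ) : R := ∑ i ∈ Finset.range n, grayTerm ε i

variable {ε}

theorem grayTerm_two_pow_add {t m : ℕ} (h : m < 2 ^ t) :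
    grayTerm ε (2 ^ t + m) = ε (t + 1) * grayTerm ε (2 ^ t - 1 - m) := by
  have hnot : t + 1 ∉ graySet (2 ^ t - 1 - m) := fun hmem => by
    simpa using Finset.mem_Icc.1 (graySet_subset_Icc (Nat.sub_one_sub_lt_of_lt h) hmem)
  rw [grayTerm, graySet_two_pow_add h, Finset.prod_insert hnot, grayTerm]

theorem grayWalk_two_pow_add {t m : ℕ} (h : m ≤ 2 ^ t) :
    grayWalk ε (2 ^ t + m) =
      grayWalk ε (2 ^ t) + ε (t + 1) * (grayWalk ε (2 ^ t) - grayWalk ε (2 ^ t - m)) := by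
  have hsplit : grayWalk ε (2 ^ t) =
      grayWalk ε (2 ^ t - m) + ∑ k ∈ Finset.range m, grayTerm ε (2 ^ t - m + k) := by
    rw [grayWalk, grayWalk, ← Finset.sum_range_add, Nat.sub_add_cancel h]
  have htail : ∑ k ∈ Finset.range m, grayTerm ε (2 ^ t + k) =
      ε (t + 1) * ∑ k ∈ Finset.range m, grayTerm ε (2 ^ t - m + k) := by
    rw [← Finset.sum_range_reflect, Finset.mul_sum]
    refine Finset.sum_congr rfl fun k hk => ?_
    have hk := Finset.mem_range.1 hk
    rw [grayTerm_two_pow_add (by omega)]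
    congr 2
    omega
  rw [grayWalk, Finset.sum_range_add, ← grayWalk, htail, hsplit, add_sub_cancel_left]

theorem grayWalk_two_pow_add_of_eq_zero {s m : ℕ} (h0 : grayWalk ε (2 ^ s) = 0)
    (hm : m ≤ 2 ^ s) : grayWalk ε (2 ^ s + m) = -(ε (s + 1) * grayWalk ε (2 ^ s - m)) := by
  rw [grayWalk_two_pow_add hm, h0]
  ring

theorem grayWalk_eq_self {t n : ℕ} (hε : ∀ j ∈ Finset.Icc 1 t, ε j = 1) (hn : n ≤ 2 ^ t) :
    grayWalk ε n = n := by
  have hterm : ∀ i ∈ Finset.range n, grayTerm ε i = 1 := fun i hi =>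
    Finset.prod_eq_one fun j hj =>
      hε j (graySet_subset_Icc ((Finset.mem_range.1 hi).trans_le hn) hj)
  simp [grayWalk, Finset.sum_congr rfl hterm]

theorem grayWalk_two_pow_add_of_neg {t m : ℕ} (hε : ∀ j ∈ Finset.Icc 1 t, ε j = 1)
    (hneg : ε (t + 1) = -1) (hm : m ≤ 2 ^ t) :
    grayWalk ε (2 ^ t + m) = 2 ^ t - m := by
  rw [grayWalk_two_pow_add hm, hneg, grayWalk_eq_self hε le_rfl,
    grayWalk_eq_self hε (Nat.sub_le _ _), Nat.cast_sub hm]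
  push_cast
  ring

theorem grayWalk_two_pow_eq_zero {t s : ℕ} (hε : ∀ j ∈ Finset.Icc 1 t, ε j = 1)
    (hneg : ε (t + 1) = -1) (hs : t < s) : grayWalk ε (2 ^ s) = 0 := by
  induction s, hs using Nat.le_induction with
  | base =>
    rw [pow_succ, mul_two, grayWalk_two_pow_add_of_neg hε hneg le_rfl]
    push_cast
    exact sub_self _
  | succ s _ ih =>
    rw [pow_succ, mul_two, grayWalk_two_pow_add_of_eq_zero ih le_rfl, Nat.sub_self]
    simp [grayWalk]

variable [LinearOrder R] [IsStrictOrderedRing R] {t : ℕ}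

theorem abs_grayWalk_le (hbound : ∀ j, |ε j| ≤ 1) (hε : ∀ j ∈ Finset.Icc 1 t, ε j = 1)
    (hneg : ε (t + 1) = -1) (n : ℕ) : |grayWalk ε n| ≤ 2 ^ t := by
  suffices h : ∀ s, t < s → ∀ n ≤ 2 ^ s, |grayWalk ε n| ≤ 2 ^ t from
    h (n + t + 1) (by omega) n
      (Nat.lt_two_pow_self.le.trans (Nat.pow_le_pow_right two_pos (by omega)))
  intro s hs
  induction s, hs using Nat.le_induction with
  | base =>
    intro n hn
    rcases le_or_gt n (2 ^ t) with hle | hgt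
    · rw [grayWalk_eq_self hε hle, abs_of_nonneg (Nat.cast_nonneg n)]
      exact_mod_cast hle
    · obtain ⟨m, rfl⟩ := Nat.exists_eq_add_of_le hgt.le
      have hm : m ≤ 2 ^ t := by rw [pow_succ] at hn; omega
      have hm' : (m : R) ≤ 2 ^ t := by exact_mod_cast hm
      rw [grayWalk_two_pow_add_of_neg hε hneg hm, abs_le]
      constructor <;> linarith [(Nat.cast_nonneg m : (0 : R) ≤ m)]
  | succ s hs ih =>
    intro n hn
    rcases le_or_gt n (2 ^ s) with hle | hgt
    · exact ih n hle
    · obtain ⟨m, rfl⟩ := Nat.exists_eq_add_of_le hgt.le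
      have hm : m ≤ 2 ^ s := by rw [pow_succ] at hn; omega
      rw [grayWalk_two_pow_add_of_eq_zero (grayWalk_two_pow_eq_zero hε hneg hs) hm, abs_neg,
        abs_mul]
      exact (mul_le_of_le_one_left (abs_nonneg _) (hbound _)).trans (ih _ (Nat.sub_le _ _))

theorem isGreatest_grayWalk_succ (hbound : ∀ j, |ε j| ≤ 1)
    (hε : ∀ j ∈ Finset.Icc 1 t, ε j = 1) (hneg : ε (t + 1) = -1) :
    IsGreatest (Set.range fun n => grayWalk ε (n + 1)) (2 ^ t) := by
  refine ⟨⟨2 ^ t - 1, ?_⟩, ?_⟩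
  · dsimp only
    rw [Nat.sub_add_cancel Nat.one_le_two_pow, grayWalk_eq_self hε le_rfl]
    norm_cast
  · rintro _ ⟨n, rfl⟩
    exact (abs_le.1 (abs_grayWalk_le hbound hε hneg _)).2

theorem isLeast_grayWalk_succ (hbound : ∀ j, |ε j| ≤ 1)
    (hε : ∀ j ∈ Finset.Icc 1 t, ε j = 1) (hneg : ε (t + 1) = -1)
    (hfreq : ∃ᶠ j in Filter.atTop, ε j = 1) :
    IsLeast (Set.range fun n => grayWalk ε (n + 1)) (-2 ^ t) := by
  obtain ⟨j, hj, hjt⟩ := (hfreq.and_eventually (Filter.eventually_ge_atTop (t + 2))).exists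
  obtain ⟨s, rfl⟩ : ∃ s, j = s + 1 := ⟨j - 1, by omega⟩
  have hts : 2 ^ t ≤ 2 ^ s := Nat.pow_le_pow_right two_pos (by omega)
  refine ⟨⟨2 ^ s + (2 ^ s - 2 ^ t) - 1, ?_⟩, ?_⟩
  · -- back at `0` at time `2 ^ s`, the walk then retraces its first `2 ^ t` steps with sign `-1`
    have h0 : grayWalk ε (2 ^ s) = 0 := grayWalk_two_pow_eq_zero hε hneg (by omega)
    dsimp only
    rw [Nat.sub_add_cancel (by have := Nat.one_le_two_pow (n := t); omega),
      grayWalk_two_pow_add_of_eq_zero h0 (Nat.sub_le _ _), Nat.sub_sub_self hts, hj,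
      grayWalk_eq_self hε le_rfl]
    push_cast
    ring
  · rintro _ ⟨n, rfl⟩
    exact (abs_le.1 (abs_grayWalk_le hbound hε hneg _)).1

end Walk

section Probability

variable {Ω : Type*} [MeasurableSpace Ω] {μ : Measure Ω} [IsProbabilityMeasure μ]

theorem ae_eq_or_eq_of_measure_add_eq_one {β : Type*} [MeasurableSpace β]
    [MeasurableSingletonClass β] {X : Ω → β} (hX : Measurable X) {a b : β} (hab : a ≠ b)
    (hμ : μ {ω | X ω = a} + μ {ω | X ω = b} = 1) : ∀ᵐ ω ∂μ, X ω = a ∨ X ω = b := by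
  have hdisj : Disjoint {ω | X ω = a} {ω | X ω = b} :=
    Set.disjoint_left.2 fun ω h1 h2 => hab (h1.symm.trans h2)
  have hmeas : ∀ c, MeasurableSet {ω | X ω = c} := fun c =>
    hX (measurableSet_singleton c)
  refine (mem_ae_iff_prob_eq_one ((hmeas a).union (hmeas b))).2 ?_
  rwa [measure_union hdisj (hmeas b)]

theorem ae_frequently_mem_of_iIndepFun {β : Type*} [MeasurableSpace β] {X : ℕ → Ω → β}
    (hX : ∀ n, Measurable (X n)) (hindep : iIndepFun X μ) {s : Set β} (hs : MeasurableSet s)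
    {c : ENNReal} (hc : c ≠ 0) (hμ : ∀ n, μ (X n ⁻¹' s) = c) :
    ∀ᵐ ω ∂μ, ∃ᶠ n in Filter.atTop, X n ω ∈ s := by
  have hmeas : ∀ n, MeasurableSet (X n ⁻¹' s) := fun n => hX n hs
  have hindepSet : iIndepSet (fun n => X n ⁻¹' s) μ :=
    (iIndepSet_iff_meas_biInter hmeas).2 fun S =>
      hindep.measure_inter_preimage_eq_mul S (sets := fun _ => s) fun _ _ => hs
  have hsum : ∑' n, μ (X n ⁻¹' s) = ⊤ := by
    simp_rw [hμ]
    exact ENNReal.tsum_const_eq_top_of_ne_zero hc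
  filter_upwards [(mem_ae_iff_prob_eq_one (MeasurableSet.measurableSet_limsup hmeas)).2
    (measure_limsup_eq_one hmeas hindepSet hsum)] with ω hω
  exact Filter.mem_limsup_iff_frequently_mem.1 hω

end Probability

/-- The Gray walk `S'_n = ∑_{i=0}^n X_i`, with `X_i = ∏_{j ∈ A_i} ξ_j`,
satisfies a.s. `sup_n S'_n = -inf_n S'_n = 2^{J-1}` where
`J = min {j ≥ 1 : ξ_j = -1}`. -/
theorem gray_walk_sup_inf
    {Ω : Type*} [MeasurableSpace Ω] (μ : Measure Ω) [IsProbabilityMeasure μ]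
    (ξ : ℕ → Ω → ℝ) (hmeas : ∀ j, Measurable (ξ j))
    (hindep : iIndepFun ξ μ)
    (hdist : ∀ j, μ {ω | ξ j ω = 1} = 1/2 ∧ μ {ω | ξ j ω = -1} = 1/2)
    (S' : ℕ → Ω → ℝ)
    (hS' : ∀ n ω, S' n ω = ∑ i ∈ Finset.range (n + 1), ∏ j ∈ graySet i, ξ j ω) :
    ∀ᵐ ω ∂μ, ∀ J : ℕ, 1 ≤ J → (∀ j, 1 ≤ j → j < J → ξ j ω = 1) → ξ J ω = -1 →
      IsLUB (Set.range fun n => S' n ω) ((2 : ℝ) ^ (J - 1)) ∧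
      IsGLB (Set.range fun n => S' n ω) (-((2 : ℝ) ^ (J - 1))) := by
  have hsign : ∀ᵐ ω ∂μ, ∀ j, ξ j ω = 1 ∨ ξ j ω = -1 :=
    ae_all_iff.2 fun j => ae_eq_or_eq_of_measure_add_eq_one (hmeas j) (by norm_num) <| by
      rw [(hdist j).1, (hdist j).2, ENNReal.add_halves]
  have hfreq : ∀ᵐ ω ∂μ, ∃ᶠ j in Filter.atTop, ξ j ω = 1 :=
    ae_frequently_mem_of_iIndepFun hmeas hindep (measurableSet_singleton 1)
      (by norm_num) fun j => (hdist j).1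
  filter_upwards [hsign, hfreq] with ω hsign hfreq J hJ hbefore hJneg
  obtain ⟨t, rfl⟩ := Nat.exists_eq_add_of_le' hJ
  have hbound : ∀ j, |ξ j ω| ≤ 1 := fun j => by rcases hsign j with h | h <;> simp [h]
  have hε : ∀ j ∈ Finset.Icc 1 t, ξ j ω = 1 := fun j hj =>
    hbefore j (Finset.mem_Icc.1 hj).1 (Nat.lt_succ_of_le (Finset.mem_Icc.1 hj).2)
  have hS : (fun n => S' n ω) = fun n => grayWalk (ξ · ω) (n + 1) := funext fun n => hS' n ω
  rw [hS, Nat.add_sub_cancel]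
  exact ⟨(isGreatest_grayWalk_succ hbound hε hJneg).isLUB,
    (isLeast_grayWalk_succ hbound hε hJneg hfreq).isGLB⟩
end

section
/- Let ξ₁, ξ₂, … be i.i.d. Rademacher variables, let k ≥ 1 and L > k with 4 | L. Let (X_i) be the sequence (ξ_i) conditioned on the event that ∏_{b=1}^L ξ_{aL+b} = 1 for every a ≥ 0. Then the X_i are k-wise independent ±1 variables, and for every j ≥ 1, ∑_{i=1}^{jL} X_i ≡ 0 (mod 4) almost surely. -/
/-!
Inside one block the law is uniform on the sign patterns of even parity, so the last coordinate
is a function of the other `L - 1`, and these are uniform: a pattern prescribed on fewer than `L`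
coordinates of a block has probability `2^{-|B|}`, as one sees by freeing one coordinate at a
time. Since blocks are independent, the same holds for any pattern on at most `k < L`
coordinates, and for `±1`-valued variables this is exactly `k`-wise independence. An even
number of `-1`'s in a block of length `L ≡ 0 (mod 4)` makes its sum `≡ 0 (mod 4)`.
-/

open MeasureTheory ProbabilityTheory
open scoped ENNReal

lemma Finset.prod_eq_one_or_neg_one {ι : Type*} {s : Finset ι} {v : ι → ℤ}
    (hv : ∀ i ∈ s, v i = 1 ∨ v i = -1) : ∏ i ∈ s, v i = 1 ∨ ∏ i ∈ s, v i = -1 := by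
  refine Finset.prod_induction v (fun x => x = 1 ∨ x = -1) ?_ (Or.inl rfl) hv
  rintro x y (rfl | rfl) (rfl | rfl) <;> norm_num

lemma Finset.sum_modEq_card_sub_one_add_prod {ι : Type*} [DecidableEq ι] {s : Finset ι}
    {v : ι → ℤ} (hv : ∀ i ∈ s, v i = 1 ∨ v i = -1) :
    ∑ i ∈ s, v i ≡ s.card - 1 + ∏ i ∈ s, v i [ZMOD 4] := by
  induction s using Finset.induction_on with
  | empty => rfl
  | insert j s hj ih =>
    have hs := Finset.prod_eq_one_or_neg_one fun i hi => hv i (Finset.mem_insert_of_mem hi)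
    have ih := ih fun i hi => hv i (Finset.mem_insert_of_mem hi)
    rw [Finset.sum_insert hj, Finset.prod_insert hj, Finset.card_insert_of_notMem hj]
    -- `x + P ≡ 1 + x * P` since `(1 - x) * (1 - P) ∈ {0, 4}` for `x, P = ±1`
    unfold Int.ModEq at *
    rcases hv j (Finset.mem_insert_self j s) with h | h <;> rcases hs with h' | h' <;>
      simp only [h, h'] at ih ⊢ <;> push_cast <;> omega

lemma four_dvd_sum_of_prod_eq_one {ι : Type*} [Fintype ι] [DecidableEq ι] {v : ι → ℤ}
    (h4 : 4 ∣ Fintype.card ι) (hv : ∀ i, v i = 1 ∨ v i = -1) (hprod : ∏ i, v i = 1) :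
    4 ∣ ∑ i, v i := by
  have h := Finset.sum_modEq_card_sub_one_add_prod (s := Finset.univ) fun i _ => hv i
  rw [hprod, sub_add_cancel, Finset.card_univ] at h
  have h4 : (4 : ℤ) ∣ Fintype.card ι := Int.natCast_dvd_natCast.2 h4
  unfold Int.ModEq at h
  omega

lemma update_eq_one_or_neg_one {ι : Type*} [DecidableEq ι] {ε : ι → ℤ}
    (hε : ∀ b, ε b = 1 ∨ ε b = -1) (c : ι) {x : ℤ} (hx : x = 1 ∨ x = -1) (b : ι) :
    Function.update ε c x b = 1 ∨ Function.update ε c x b = -1 := by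
  rcases eq_or_ne b c with rfl | hb
  · rwa [Function.update_self]
  · rw [Function.update_of_ne hb]; exact hε b

section SignPattern

variable {Ω ι : Type*} [MeasurableSpace Ω] {μ : Measure Ω} [Fintype ι] [DecidableEq ι]
  {Y : Ω → ι → ℤ}

lemma measure_pattern_eq_add_of_notMem (hY : ∀ ω b, Y ω b = 1 ∨ Y ω b = -1) (hYm : Measurable Y)
    {B : Finset ι} {c : ι} (hc : c ∉ B) (ε : ι → ℤ) :
    μ {ω | ∀ b ∈ B, Y ω b = ε b} =
      μ {ω | ∀ b ∈ insert c B, Y ω b = Function.update ε c 1 b} +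
        μ {ω | ∀ b ∈ insert c B, Y ω b = Function.update ε c (-1) b} := by
  have hsplit : ∀ x : ℤ, {ω | ∀ b ∈ insert c B, Y ω b = Function.update ε c x b} =
      {ω | Y ω c = x} ∩ {ω | ∀ b ∈ B, Y ω b = ε b} := by
    intro x
    ext ω
    simp only [Finset.mem_insert, forall_eq_or_imp, Function.update_self, Set.mem_ofPred_eq,
      Set.mem_inter_iff]
    refine and_congr_right fun _ => forall₂_congr fun b hb => ?_
    rw [Function.update_of_ne (ne_of_mem_of_not_mem hb hc)]
  rw [hsplit, hsplit, ← measure_union]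
  · congr 1
    ext ω
    rcases hY ω c with h | h <;> simp [h]
  · exact Set.disjoint_left.2 fun ω h1 h2 => by
      have := h1.1.symm.trans h2.1
      norm_num at this
  · exact hYm (Set.to_countable {f : ι → ℤ | f c = -1 ∧ ∀ b ∈ B, f b = ε b}).measurableSet

theorem measure_pattern_of_card_lt (hY : ∀ ω b, Y ω b = 1 ∨ Y ω b = -1) (hYm : Measurable Y)
    (hdist : ∀ v : ι → ℤ, (∀ b, v b = 1 ∨ v b = -1) →
      μ {ω | ∀ b, Y ω b = v b} = if ∏ b, v b = 1 then 2⁻¹ ^ (Fintype.card ι - 1) else 0)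
    {B : Finset ι} (hB : B.card < Fintype.card ι) {ε : ι → ℤ} (hε : ∀ b, ε b = 1 ∨ ε b = -1) :
    μ {ω | ∀ b ∈ B, Y ω b = ε b} = 2⁻¹ ^ B.card := by
  obtain ⟨c, -, hc⟩ := Finset.exists_mem_notMem_of_card_lt_card (s := B) (t := Finset.univ)
    (by rwa [Finset.card_univ])
  have hcard : (insert c B).card = B.card + 1 := Finset.card_insert_of_notMem hc
  rw [measure_pattern_eq_add_of_notMem hY hYm hc]
  by_cases hfull : insert c B = Finset.univ
  · have hprod : ∀ x, ∏ b, Function.update ε c x b = x * ∏ b ∈ B, ε b := fun x => by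
      rw [← hfull, Finset.prod_insert hc, Function.update_self, Finset.prod_update_of_notMem hc]
    have hBcard : B.card = Fintype.card ι - 1 := by
      rw [← Finset.card_univ, ← hfull, hcard, Nat.add_sub_cancel]
    -- the two completions of `ε` on `B` have opposite products: exactly one is admissible
    simp only [hfull, Finset.mem_univ, forall_const]
    rw [hdist _ (update_eq_one_or_neg_one hε c (.inl rfl)),
      hdist _ (update_eq_one_or_neg_one hε c (.inr rfl)), hprod, hprod, hBcard]
    rcases Finset.prod_eq_one_or_neg_one fun b _ => hε b with h | h <;> rw [h] <;> norm_num
  · have hlt : (insert c B).card < Fintype.card ι := by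
      rw [← Finset.card_univ]; exact Finset.card_lt_card (Finset.ssubset_univ_iff.2 hfull)
    rw [measure_pattern_of_card_lt hY hYm hdist hlt (update_eq_one_or_neg_one hε c (.inl rfl)),
      measure_pattern_of_card_lt hY hYm hdist hlt (update_eq_one_or_neg_one hε c (.inr rfl)),
      hcard, pow_succ, ← mul_add, ENNReal.inv_two_add_inv_two, mul_one]
termination_by Fintype.card ι - B.card

theorem measure_pattern_of_iIndepFun_blocks {κ : Type*} [DecidableEq κ] {Z : κ → Ω → ι → ℤ}
    (hZ : ∀ a ω b, Z a ω b = 1 ∨ Z a ω b = -1) (hZm : ∀ a, Measurable (Z a))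
    (hindep : iIndepFun Z μ)
    (hdist : ∀ a, ∀ v : ι → ℤ, (∀ b, v b = 1 ∨ v b = -1) →
      μ {ω | ∀ b, Z a ω b = v b} = if ∏ b, v b = 1 then 2⁻¹ ^ (Fintype.card ι - 1) else 0)
    {T : Finset (κ × ι)} (hT : ∀ a, {p ∈ T | p.1 = a}.card < Fintype.card ι)
    {ε : κ × ι → ℤ} (hε : ∀ p, ε p = 1 ∨ ε p = -1) :
    μ {ω | ∀ p ∈ T, Z p.1 ω p.2 = ε p} = 2⁻¹ ^ T.card := by
  set A := T.image Prod.fst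
  set fiber : κ → Finset ι := fun a => {p ∈ T | p.1 = a}.image Prod.snd
  have hmem_fiber : ∀ a b, b ∈ fiber a ↔ (a, b) ∈ T := by simp [fiber]
  have hcard_fiber : ∀ a, (fiber a).card = {p ∈ T | p.1 = a}.card := fun a =>
    Finset.card_image_of_injOn fun p hp q hq h =>
      Prod.ext ((Finset.mem_filter.1 hp).2.trans (Finset.mem_filter.1 hq).2.symm) h
  have hevent : {ω | ∀ p ∈ T, Z p.1 ω p.2 = ε p} =
      ⋂ a ∈ A, Z a ⁻¹' {f | ∀ b ∈ fiber a, f b = ε (a, b)} := by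
    ext ω
    simp only [Set.mem_ofPred_eq, Set.mem_iInter, Set.mem_preimage, hmem_fiber, A,
      Finset.mem_image, Prod.exists, exists_and_right, exists_eq_right, Prod.forall]
    exact ⟨fun h a _ b hb => h a b hb, fun h a b hab => h a ⟨b, hab⟩ b hab⟩
  have hblock : ∀ a ∈ A, μ (Z a ⁻¹' {f | ∀ b ∈ fiber a, f b = ε (a, b)}) =
      2⁻¹ ^ {p ∈ T | p.1 = a}.card := fun a _ => by
    rw [← hcard_fiber]
    exact measure_pattern_of_card_lt (hZ a) (hZm a) (hdist a) (hcard_fiber a ▸ hT a)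
        fun b => hε (a, b)
  rw [hevent, hindep.measure_inter_preimage_eq_mul A fun a _ => (Set.to_countable _).measurableSet,
    Finset.prod_congr rfl hblock, Finset.prod_pow_eq_pow_sum,
    ← Finset.card_eq_sum_card_fiberwise fun p hp => Finset.mem_image_of_mem Prod.fst hp]

end SignPattern

lemma ae_prod_eq_one_of_measure_pattern_eq_zero {Ω ι : Type*} [MeasurableSpace Ω]
    {μ : Measure Ω} [Fintype ι] {Y : Ω → ι → ℤ} (hY : ∀ ω b, Y ω b = 1 ∨ Y ω b = -1)
    (hnull : ∀ v : ι → ℤ, (∀ b, v b = 1 ∨ v b = -1) → ∏ b, v b ≠ 1 →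
      μ {ω | ∀ b, Y ω b = v b} = 0) :
    ∀ᵐ ω ∂μ, ∏ b, Y ω b = 1 := by
  rw [ae_iff]
  refine measure_mono_null (t := ⋃ v ∈ {v : ι → ℤ | (∀ b, v b = 1 ∨ v b = -1) ∧ ∏ b, v b ≠ 1},
    {ω | ∀ b, Y ω b = v b}) (fun ω hω => Set.mem_biUnion ⟨hY ω, hω⟩ fun _ => rfl) ?_
  exact (measure_biUnion_null_iff (Set.to_countable _)).2 fun v hv => hnull v hv.1 hv.2

lemma dvd_sum_range_mul_of_dvd_block_sums {R : Type*} [CommSemiring R] {d : R} {f : ℕ → R}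
    {L : ℕ} (hblock : ∀ a, d ∣ ∑ b : Fin L, f (a * L + b)) (j : ℕ) :
    d ∣ ∑ i ∈ Finset.range (j * L), f i := by
  induction j with
  | zero => simp
  | succ j ih =>
    rw [Nat.succ_mul, Finset.sum_range_add]
    exact dvd_add ih (Fin.sum_univ_eq_sum_range (fun b => f (j * L + b)) L ▸ hblock j)

lemma iIndepFun_of_measure_pattern_eq_prod {Ω ι β : Type*} [MeasurableSpace Ω]
    {μ : Measure Ω} [IsProbabilityMeasure μ] [Fintype ι] [MeasurableSpace β] [Countable β]
    [MeasurableSingletonClass β] {X : ι → Ω → β} (hX : ∀ i, Measurable (X i))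
    (h : ∀ v : ι → β, μ {ω | ∀ i, X i ω = v i} = ∏ i, μ {ω | X i ω = v i}) :
    iIndepFun X μ := by
  rw [iIndepFun_iff_map_fun_eq_pi_map fun i => (hX i).aemeasurable]
  refine Measure.ext_of_singleton fun v => ?_
  rw [Measure.map_apply (measurable_pi_lambda _ hX) (measurableSet_singleton v),
    Measure.pi_singleton]
  simp_rw [Measure.map_apply (hX _) (measurableSet_singleton _)]
  simpa [Set.preimage, funext_iff] using h v

lemma iIndepFun_of_measure_sign_pattern {Ω α : Type*} [MeasurableSpace Ω] {μ : Measure Ω}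
    [IsProbabilityMeasure μ] {X : α → Ω → ℤ} (hX : ∀ i, Measurable (X i))
    (hrange : ∀ i ω, X i ω = 1 ∨ X i ω = -1) (s : Finset α)
    (hpattern : ∀ t ⊆ s, ∀ ε : α → ℤ, (∀ i, ε i = 1 ∨ ε i = -1) →
      μ {ω | ∀ i ∈ t, X i ω = ε i} = 2⁻¹ ^ t.card) :
    iIndepFun (fun i : s => X i) μ := by
  classical
  refine iIndepFun_of_measure_pattern_eq_prod (fun i => hX i) fun v => ?_
  by_cases hv : ∀ i, v i = 1 ∨ v i = -1
  · set ε : α → ℤ := fun n => if h : n ∈ s then v ⟨n, h⟩ else 1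
    have hε : ∀ n, ε n = 1 ∨ ε n = -1 := fun n => by
      by_cases h : n ∈ s <;> simp [ε, h, hv]
    have hjoint : {ω | ∀ i : s, X i ω = v i} = {ω | ∀ n ∈ s, X n ω = ε n} := by
      ext ω
      simp only [Set.mem_ofPred_eq, Subtype.forall, ε]
      exact forall₂_congr fun n hn => by rw [dif_pos hn]
    have hsingle : ∀ i : s,
        {ω | X i ω = v i} = {ω | ∀ n ∈ ({(i : α)} : Finset α), X n ω = ε n} := by
      intro i; ext ω; simp [ε]
    simp_rw [hjoint, hsingle, hpattern s subset_rfl ε hε,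
      hpattern _ (Finset.singleton_subset_iff.2 (Subtype.prop _)) ε hε]
    simp
  · push Not at hv
    obtain ⟨i, hi1, hi2⟩ := hv
    have hempty : {ω | X i ω = v i} = ∅ := Set.eq_empty_of_forall_notMem fun ω hω => by
      rcases hrange i ω with h | h <;> simp_all
    have hnull : μ {ω | X i ω = v i} = 0 := by rw [hempty, measure_empty]
    rw [Finset.prod_eq_zero (Finset.mem_univ i) hnull]
    exact measure_mono_null (fun ω h => h i) hnull

theorem measure_pattern_of_card_lt_of_blocks {Ω : Type*} [MeasurableSpace Ω] {μ : Measure Ω}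
    {L : ℕ} {X : ℕ → Ω → ℤ} (hmeas : ∀ i, Measurable (X i))
    (hrange : ∀ i ω, X i ω = 1 ∨ X i ω = -1)
    (hblockindep : iIndepFun (fun a ω => fun b : Fin L => X (a * L + b) ω) μ)
    (hblockdist : ∀ a : ℕ, ∀ v : Fin L → ℤ, (∀ b, v b = 1 ∨ v b = -1) →
      μ {ω | ∀ b : Fin L, X (a * L + b) ω = v b} =
        if (∏ b, v b) = 1 then (2 : ℝ≥0∞)⁻¹ ^ (L - 1) else 0)
    {t : Finset ℕ} (ht : t.card < L) {ε : ℕ → ℤ} (hε : ∀ i, ε i = 1 ∨ ε i = -1) :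
    μ {ω | ∀ i ∈ t, X i ω = ε i} = 2⁻¹ ^ t.card := by
  have : NeZero L := ⟨by omega⟩
  let e := Nat.divModEquiv L
  have h := measure_pattern_of_iIndepFun_blocks (Z := fun a ω (b : Fin L) => X (a * L + b) ω)
    (fun a ω b => hrange _ ω)
    (fun a => measurable_pi_lambda _ fun b => hmeas _) hblockindep
    (fun a v hv => by simpa using hblockdist a v hv) (T := t.map e.toEmbedding)
    (fun a => (Finset.card_filter_le _ _).trans_lt (by simpa using ht)) (ε := ε ∘ e.symm)
    (fun p => hε _)
  rw [Finset.card_map] at h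
  convert h using 2
  ext ω
  simp only [Set.mem_ofPred_eq, Finset.forall_mem_map, Equiv.coe_toEmbedding]
  exact forall₂_congr fun i _ => by
    change _ ↔ X (e.symm (e i)) ω = ε (e.symm (e i))
    rw [Equiv.symm_apply_apply]

theorem conditioned_blocks_kwise_independent_mod_four_general
    {Ω : Type*} [MeasurableSpace Ω] (μ : Measure Ω) [IsProbabilityMeasure μ]
    (k L : ℕ) (hkL : k < L) (hL4 : 4 ∣ L)
    (X : ℕ → Ω → ℤ) (hmeas : ∀ i, Measurable (X i))
    (hrange : ∀ i ω, X i ω = 1 ∨ X i ω = -1)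
    (hblockindep : iIndepFun
      (fun a ω => fun b : Fin L => X (a * L + b) ω) μ)
    (hblockdist : ∀ a : ℕ, ∀ v : Fin L → ℤ, (∀ b, v b = 1 ∨ v b = -1) →
      μ {ω | ∀ b : Fin L, X (a * L + b) ω = v b} =
        if (∏ b, v b) = 1 then (2 : ℝ≥0∞)⁻¹ ^ (L - 1) else 0) :
    (∀ s : Finset ℕ, s.card ≤ k →
      iIndepFun (fun i : s => X i) μ) ∧
    (∀ i, μ {ω | X i ω = 1} = 1/2) ∧
    (∀ j : ℕ, 1 ≤ j →
      ∀ᵐ ω ∂μ, (4 : ℤ) ∣ ∑ i ∈ Finset.range (j * L), X i ω) := by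
  have hpattern {t : Finset ℕ} (ht : t.card < L) {ε : ℕ → ℤ} (hε : ∀ i, ε i = 1 ∨ ε i = -1) :=
    measure_pattern_of_card_lt_of_blocks hmeas hrange hblockindep hblockdist ht hε
  refine ⟨fun s hs => ?_, fun i => ?_, fun j _ => ?_⟩
  · exact iIndepFun_of_measure_sign_pattern hmeas hrange s fun t hts ε hε =>
      hpattern ((Finset.card_le_card hts).trans_lt (hs.trans_lt hkL)) hε
  · simpa using hpattern (t := {i}) (by rw [Finset.card_singleton]; omega) (ε := fun _ => 1)
      fun _ => .inl rfl
  · have hprod : ∀ᵐ ω ∂μ, ∀ a : ℕ, ∏ b : Fin L, X (a * L + b) ω = 1 :=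
      ae_all_iff.2 fun a => ae_prod_eq_one_of_measure_pattern_eq_zero (fun ω b => hrange _ ω)
        fun v hv hne => by rw [hblockdist a v hv, if_neg hne]
    filter_upwards [hprod] with ω hω
    exact dvd_sum_range_mul_of_dvd_block_sums (fun a => four_dvd_sum_of_prod_eq_one
      (by simpa using hL4) (fun b => hrange _ ω) (hω a)) j

/-- Let `4 ∣ L`, `k < L`, and let `(X_i)_{i ≥ 0}` be distributed as i.i.d.
Rademacher variables conditioned on every block of length `L` having product
`1` (formally: the blocks `(X_{aL}, …, X_{aL+L-1})` are independent and each is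
distributed as `L` i.i.d. Rademacher variables conditioned on their product
being `1`, i.e. each admissible sign pattern has probability `2^{-(L-1)}`).
Then the `X_i` are `k`-wise independent Rademacher variables, and every partial
sum up to a multiple of `L` is `≡ 0 (mod 4)` almost surely. -/
theorem conditioned_blocks_kwise_independent_mod_four
    {Ω : Type*} [MeasurableSpace Ω] (μ : Measure Ω) [IsProbabilityMeasure μ]
    (k L : ℕ) (hk : 0 < k) (hkL : k < L) (hL4 : 4 ∣ L)
    (X : ℕ → Ω → ℤ) (hmeas : ∀ i, Measurable (X i))
    (hrange : ∀ i ω, X i ω = 1 ∨ X i ω = -1)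
    (hblockindep : iIndepFun
      (fun a ω => fun b : Fin L => X (a * L + b) ω) μ)
    (hblockdist : ∀ a : ℕ, ∀ v : Fin L → ℤ, (∀ b, v b = 1 ∨ v b = -1) →
      μ {ω | ∀ b : Fin L, X (a * L + b) ω = v b} =
        if (∏ b, v b) = 1 then (2 : ℝ≥0∞)⁻¹ ^ (L - 1) else 0) :
    (∀ s : Finset ℕ, s.card ≤ k →
      iIndepFun (fun i : s => X i) μ) ∧
    (∀ i, μ {ω | X i ω = 1} = 1/2) ∧
    (∀ j : ℕ, 1 ≤ j →
      ∀ᵐ ω ∂μ, (4 : ℤ) ∣ ∑ i ∈ Finset.range (j * L), X i ω) :=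
  conditioned_blocks_kwise_independent_mod_four_general μ k L hkL hL4 X hmeas hrange hblockindep
    hblockdist
end

section
/- Let m be even, N a positive even integer, and A = min over even residues j of #{v ∈ {±1}^N : ∑ v_i ≡ j (mod m)}. Then 2^N − (m/2)·A ≤ C·2^N·e^{−cN/m²} for absolute constants c, C > 0. -/
/-!
Write `m = 2h`. Since `N` and `j` are even, `m ∣ ∑ vᵢ - j` says that the number of entries `+1`
is `≡ r (mod h)` with `r = (N + j) / 2`. The roots-of-unity filter gives
`h · #{…} = ∑_{k<h} ζ^(-kr) (1 + ζ^k)^N` for `ζ = exp(2πi/h)`; the term `k = 0` is `2^N`, and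
`|1 + ζ^k| = 2 |cos(πk/h)|`. Jordan's inequality `sin x ≥ 2x/π` bounds
`|cos(πk/h)|^N ≤ q^min(k, h-k)` with `q = exp(-2N/h²)`, so the other terms add up to at most
`2^N · 2q/(1-q)`, which is `≤ 2^N · 4q` once `q ≤ 1/2`; for larger `q` the claim is trivial.
-/

open Finset Real

theorem IsPrimitiveRoot.geom_sum_zpow_eq_ite {K : Type*} [Field K] {ζ : K} {h : ℕ}
    (hζ : IsPrimitiveRoot ζ h) (s : ℤ) :
    ∑ k ∈ range h, (ζ ^ s) ^ k = if (h : ℤ) ∣ s then (h : K) else 0 := by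
  split_ifs with hs
  · simp [(hζ.zpow_eq_one_iff_dvd s).2 hs]
  · have hne : ζ ^ s - 1 ≠ 0 := sub_ne_zero.2 fun h1 => hs ((hζ.zpow_eq_one_iff_dvd s).1 h1)
    have hpow : (ζ ^ s) ^ h = 1 := by
      rw [← zpow_natCast, ← zpow_mul, mul_comm, zpow_mul, zpow_natCast, hζ.pow_eq_one, one_zpow]
    simpa [hpow, hne] using geom_sum_mul (ζ ^ s) h

theorem norm_one_add_exp_two_mul_I (x : ℝ) :
    ‖1 + Complex.exp (2 * x * Complex.I)‖ = 2 * |cos x| := by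
  have : 1 + Complex.exp (2 * x * Complex.I) =
      Complex.exp (x * Complex.I) * (2 * cos x : ℝ) := by
    push_cast
    rw [Complex.two_cos, mul_add, ← Complex.exp_add, ← Complex.exp_add]
    ring_nf
    simp [add_comm]
  rw [this, norm_mul, Complex.norm_exp_ofReal_mul_I, Complex.norm_real, Real.norm_eq_abs, abs_mul]
  simp

theorem abs_cos_le_exp_neg_sin_sq_div_two (x : ℝ) : |cos x| ≤ exp (-sin x ^ 2 / 2) := by
  refine le_of_pow_le_pow_left₀ two_ne_zero (exp_pos _).le ?_
  rw [sq_abs, cos_sq', sq (exp _), ← exp_add, add_halves]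
  linarith [add_one_le_exp (-sin x ^ 2)]

theorem two_mul_min_sub_div_le_sin_pi_mul_div {h k : ℕ} (hk : k ≤ h) :
    2 * (min k (h - k) : ℕ) / h ≤ sin (π * k / h) := by
  rcases Nat.eq_zero_or_pos h with rfl | hh
  · simp
  set l := min k (h - k)
  have hsin : sin (π * k / h) = sin (π * l / h) := by
    rcases min_choice k (h - k) with hmin | hmin
    · rw [show l = k from hmin]
    rw [show l = h - k from hmin, Nat.cast_sub hk, ← sin_pi_sub]
    field_simp
  have hl : 2 * (l : ℝ) ≤ h := by exact_mod_cast (show 2 * l ≤ h by omega)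
  have hpos : (0 : ℝ) < h := by exact_mod_cast hh
  rw [hsin]
  convert mul_le_sin (x := π * l / h) (by positivity) ?_ using 1
  · field_simp
  · rw [div_le_div_iff₀ hpos two_pos]
    nlinarith [pi_pos]

theorem abs_cos_pi_mul_div_pow_le {h k : ℕ} (hk : k ≤ h) (N : ℕ) :
    |cos (π * k / h)| ^ N ≤ exp (-2 * N / h ^ 2) ^ k + exp (-2 * N / h ^ 2) ^ (h - k) := by
  set l := min k (h - k)
  set x := π * k / h
  have hsin : 2 * (l : ℝ) / h ≤ sin x := two_mul_min_sub_div_le_sin_pi_mul_div hk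
  have hmin : exp (-2 * N / h ^ 2) ^ l ≤
      exp (-2 * N / h ^ 2) ^ k + exp (-2 * N / h ^ 2) ^ (h - k) := by
    rcases min_choice k (h - k) with hl | hl
    · rw [show l = k from hl]
      exact le_add_of_nonneg_right (by positivity)
    · rw [show l = h - k from hl]
      exact le_add_of_nonneg_left (by positivity)
  refine le_trans ?_ hmin
  calc |cos x| ^ N ≤ exp (-sin x ^ 2 / 2) ^ N :=
        pow_le_pow_left₀ (abs_nonneg _) (abs_cos_le_exp_neg_sin_sq_div_two x) N
    _ ≤ exp (-2 * N / h ^ 2) ^ l := by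
        rw [← exp_nat_mul, ← exp_nat_mul]
        refine exp_le_exp.2 ?_
        have hl_sq : (l : ℝ) ≤ l ^ 2 := by exact_mod_cast Nat.le_self_pow two_ne_zero l
        have hsin_sq : 4 * (l : ℝ) / h ^ 2 ≤ sin x ^ 2 := by
          calc 4 * (l : ℝ) / h ^ 2 ≤ (2 * l / h) ^ 2 := by
                rw [div_pow]; gcongr; linarith
            _ ≤ sin x ^ 2 := pow_le_pow_left₀ (by positivity) hsin 2
        rw [show (l : ℝ) * (-2 * N / h ^ 2) = -(N / 2) * (4 * l / h ^ 2) by ring]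
        nlinarith [mul_le_mul_of_nonneg_left hsin_sq N.cast_nonneg]

theorem sum_Ico_pow_add_pow_sub_le {q : ℝ} (hq0 : 0 ≤ q) (hq1 : q < 1) (h : ℕ) :
    ∑ k ∈ Ico 1 h, (q ^ k + q ^ (h - k)) ≤ 2 * q / (1 - q) := by
  have hreflect : ∑ k ∈ Ico 1 h, q ^ (h - k) = ∑ k ∈ Ico 1 h, q ^ k := by
    rw [sum_Ico_reflect (fun k => q ^ k) 1 (Nat.le_succ h), Nat.add_sub_cancel_left,
      Nat.add_sub_cancel]
  have hgeom : ∑ k ∈ Ico 1 h, q ^ k ≤ q / (1 - q) := by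
    simpa using geom_sum_Ico_le_of_lt_one (m := 1) (n := h) hq0 hq1
  rw [sum_add_distrib, hreflect, mul_div_assoc, two_mul]
  exact add_le_add hgeom hgeom

section SignVectors

variable {ι : Type*} [Fintype ι]

theorem sum_ite_one_neg_one_eq_two_mul_card_filter_sub (σ : ι → Bool) :
    ∑ i, (if σ i then (1 : ℤ) else -1) = 2 * #{i | σ i} - Fintype.card ι := by
  calc ∑ i, (if σ i then (1 : ℤ) else -1) = ∑ i, (2 * (if σ i then 1 else 0) - 1) :=
        sum_congr rfl fun i _ => by cases σ i <;> rfl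
    _ = _ := by rw [sum_sub_distrib, ← mul_sum, sum_boole]; simp

theorem two_mul_dvd_sum_ite_one_neg_one_sub_iff (σ : ι → Bool) {h : ℕ} {j r : ℤ}
    (hr : Fintype.card ι + j = 2 * r) :
    (2 * h : ℤ) ∣ (∑ i, if σ i then (1 : ℤ) else -1) - j ↔ (h : ℤ) ∣ #{i | σ i} - r := by
  rw [sum_ite_one_neg_one_eq_two_mul_card_filter_sub,
    show 2 * (#{i | σ i} : ℤ) - Fintype.card ι - j = 2 * (#{i | σ i} - r) by linarith]
  exact Int.mul_dvd_mul_iff_left two_ne_zero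

variable [DecidableEq ι]

theorem sum_pow_card_filter_eq_one_add_pow {R : Type*} [CommSemiring R] (z : R) :
    ∑ σ : ι → Bool, z ^ #{i | σ i} = (1 + z) ^ Fintype.card ι := by
  calc ∑ σ : ι → Bool, z ^ #{i | σ i} = ∑ σ : ι → Bool, ∏ i, if σ i then z else 1 := by
        simp only [← prod_const, prod_filter]
    _ = ∏ _i : ι, ∑ b : Bool, if b then z else 1 :=
        (Fintype.prod_sum fun (_ : ι) (b : Bool) => if b then z else 1).symm
    _ = (1 + z) ^ Fintype.card ι := by simp [add_comm]

theorem IsPrimitiveRoot.mul_card_filter_dvd_sub_eq_sum {K : Type*} [Field K]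
    {ζ : K} {h : ℕ} (hζ : IsPrimitiveRoot ζ h) (r : ℤ) :
    (h : K) * #{σ : ι → Bool | (h : ℤ) ∣ #{i | σ i} - r} =
      ∑ k ∈ range h, (ζ ^ k) ^ (-r) * (1 + ζ ^ k) ^ Fintype.card ι := by
  rcases Nat.eq_zero_or_pos h with rfl | hh
  · simp
  have hζ0 : ζ ≠ 0 := hζ.ne_zero hh.ne'
  calc (h : K) * #{σ : ι → Bool | (h : ℤ) ∣ #{i | σ i} - r}
      = ∑ σ : ι → Bool, ∑ k ∈ range h, (ζ ^ ((#{i | σ i} : ℤ) - r)) ^ k := by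
        simp only [hζ.geom_sum_zpow_eq_ite, natCast_card_filter, mul_sum, mul_ite, mul_one,
          mul_zero]
    _ = ∑ k ∈ range h, ∑ σ : ι → Bool, (ζ ^ k) ^ (-r) * (ζ ^ k) ^ #{i | σ i} := by
        rw [sum_comm]
        refine sum_congr rfl fun k _ => sum_congr rfl fun σ _ => ?_
        rw [← zpow_natCast (ζ ^ k), ← zpow_add₀ (pow_ne_zero k hζ0), ← zpow_natCast, ← zpow_mul,
          ← zpow_natCast ζ, ← zpow_mul]
        ring_nf
    _ = ∑ k ∈ range h, (ζ ^ k) ^ (-r) * (1 + ζ ^ k) ^ Fintype.card ι := by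
        simp only [← mul_sum, sum_pow_card_filter_eq_one_add_pow]

theorem abs_mul_card_filter_dvd_sub_sub_two_pow_le {h : ℕ} (hh : 0 < h) (r : ℤ) :
    |(h : ℝ) * #{σ : ι → Bool | (h : ℤ) ∣ #{i | σ i} - r} - 2 ^ Fintype.card ι| ≤
      2 ^ Fintype.card ι * ∑ k ∈ Ico 1 h, |cos (π * k / h)| ^ Fintype.card ι := by
  set ζ := Complex.exp (2 * π * Complex.I / h)
  have hζ1 : ‖ζ‖ = 1 := by simp [ζ, Complex.norm_exp]
  have hζk (k : ℕ) : ζ ^ k = Complex.exp (2 * (π * k / h : ℝ) * Complex.I) := by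
    rw [← Complex.exp_nat_mul]
    push_cast
    ring_nf
  have hfourier :=
    (Complex.isPrimitiveRoot_exp h hh.ne').mul_card_filter_dvd_sub_eq_sum (ι := ι) r
  rw [range_eq_Ico, sum_eq_sum_Ico_succ_bot hh] at hfourier
  simp only [pow_zero, one_zpow, one_mul, one_add_one_eq_two] at hfourier
  rw [← Real.norm_eq_abs, ← Complex.norm_real]
  push_cast
  rw [hfourier, add_sub_cancel_left, mul_sum]
  refine (norm_sum_le _ _).trans (le_of_eq (sum_congr rfl fun k _ => ?_))
  rw [norm_mul, norm_zpow, norm_pow, norm_pow, hζ1, one_pow, one_zpow, one_mul, hζk,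
    norm_one_add_exp_two_mul_I, mul_pow]

theorem two_pow_sub_mul_card_filter_dvd_sub_le {h : ℕ} (hh : 0 < h) (r : ℤ) :
    (2 : ℝ) ^ Fintype.card ι - h * #{σ : ι → Bool | (h : ℤ) ∣ #{i | σ i} - r} ≤
      4 * 2 ^ Fintype.card ι * exp (-2 * Fintype.card ι / h ^ 2) := by
  set N := Fintype.card ι
  set q := exp (-2 * N / h ^ 2)
  have hq0 : 0 < q := exp_pos _
  by_cases hq : q ≤ 1 / 2
  · calc (2 : ℝ) ^ N - h * #{σ : ι → Bool | (h : ℤ) ∣ #{i | σ i} - r}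
        ≤ |h * #{σ : ι → Bool | (h : ℤ) ∣ #{i | σ i} - r} - (2 : ℝ) ^ N| := by
          rw [abs_sub_comm]
          exact le_abs_self _
      _ ≤ 2 ^ N * ∑ k ∈ Ico 1 h, |cos (π * k / h)| ^ N :=
          abs_mul_card_filter_dvd_sub_sub_two_pow_le hh r
      _ ≤ 2 ^ N * ∑ k ∈ Ico 1 h, (q ^ k + q ^ (h - k)) := by
          gcongr with k hk
          exact abs_cos_pi_mul_div_pow_le (mem_Ico.1 hk).2.le N
      _ ≤ 2 ^ N * (2 * q / (1 - q)) := by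
          gcongr
          exact sum_Ico_pow_add_pow_sub_le hq0.le (by linarith) h
      _ ≤ 4 * 2 ^ N * q := by
          rw [mul_assoc 4, mul_comm 4, mul_assoc]
          gcongr
          rw [div_le_iff₀ (by linarith)]
          nlinarith
  · have hcount : (0 : ℝ) ≤ h * #{σ : ι → Bool | (h : ℤ) ∣ #{i | σ i} - r} := by positivity
    have : (2 : ℝ) ^ N ≤ 4 * 2 ^ N * q := by nlinarith [pow_pos (two_pos (α := ℝ)) N]
    linarith

end SignVectors

/-- Trimming bound: for `m` even, `N` even, if `A` is the minimum over even
residues `j` modulo `m` of the number of sign vectors `v ∈ {±1}^N` with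
`∑ vᵢ ≡ j (mod m)`, then `2^N - (m/2)·A ≤ C·2^N·exp(-cN/m²)` for absolute
constants `c, C > 0`. -/
theorem trimmed_count_bound :
    ∃ C : ℝ, 0 < C ∧ ∃ c : ℝ, 0 < c ∧
      ∀ (N m : ℕ), 0 < N → Even N → 0 < m → Even m →
      ∀ A : ℕ,
        A = sInf {a : ℕ | ∃ j ∈ Finset.range m, Even j ∧
          a = (Finset.univ.filter (fun σ : Fin N → Bool =>
                (m : ℤ) ∣ ((∑ i, if σ i then (1 : ℤ) else -1) - (j : ℤ)))).card} →
        (2 : ℝ) ^ N - ((m / 2 : ℕ) : ℝ) * A ≤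
          C * 2 ^ N * Real.exp (-c * N / (m : ℝ) ^ 2) := by
  refine ⟨4, by norm_num, 8, by norm_num, ?_⟩
  rintro N m - ⟨n, hn⟩ hm ⟨h, rfl⟩ A rfl
  obtain ⟨j, -, ⟨j', rfl⟩, hA⟩ := Nat.sInf_mem (s := {a : ℕ | ∃ j ∈ range (h + h), Even j ∧
      a = #{σ : Fin N → Bool | ((h + h : ℕ) : ℤ) ∣ (∑ i, if σ i then (1 : ℤ) else -1) - j}})
    ⟨_, 0, mem_range.2 hm, ⟨0, rfl⟩, rfl⟩
  have hr : (Fintype.card (Fin N) : ℤ) + (j' + j' : ℕ) = 2 * (n + j' : ℕ) := by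
    simp only [Fintype.card_fin, hn]
    push_cast
    ring
  have hfilter := filter_congr (s := univ) fun σ (_ : σ ∈ univ) =>
    two_mul_dvd_sum_ite_one_neg_one_sub_iff σ (h := h) hr
  have hbound := two_pow_sub_mul_card_filter_dvd_sub_le (ι := Fin N) (by omega : 0 < h) (n + j' : ℕ)
  rw [Fintype.card_fin] at hbound
  rw [hA, show (h + h) / 2 = h by omega, Nat.cast_add h h, ← two_mul, hfilter]
  convert hbound using 3
  push_cast
  ring
end

section
/- Let ξ₁, ξ₂, … be i.i.d. Rademacher variables, N ≥ k+1, and group them into blocks Ξ_a = (ξ_{Na−N+1}, …, ξ_{Na}). Let S ⊆ {±1}^N and let B = min{b : #{a ≤ b : Ξ_a ∉ S} = k+1} (assumed a.s. finite). Suppose Y is an event measurable with respect to (ξ₁,…,ξ_{BN}) such that P(Y | X ∩ S(σ,b)) = P(Y) for every b and every σ ⊆ {1,…,b−1} with |σ| = b−(k+1), where S(σ,b) = {Ξ_a ∈ S ⇔ a ∈ σ, ∀a ≤ b} and X = {ξ_{i₁}=δ₁,…,ξ_{i_k}=δ_k} is any cylinder event on k coordinates. Then P(X | Y) = P(X) =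 2^{−k}. -/
/-!
For `σ, b` as in the hypothesis, `S(σ, b)` is the event that `b` is the stopping time `B` of the
`(k + 1)`-st block outside `S` and `σ` the set of earlier blocks inside `S`. These events are
therefore pairwise disjoint and, `B` being a.s. finite, cover `Ω` up to a null set. Summing
`P(Y ∩ X ∩ S(σ, b)) = P(Y) P(X ∩ S(σ, b))` over this countable partition gives
`P(X ∩ Y) = P(Y) P(X)`, and `P(X) = 2⁻ᵏ` by independence of the coordinates.
-/

open MeasureTheory ProbabilityTheory Finset Function
open scoped Classical ENNReal

section Partition

variable {Ω ι : Type*} [MeasurableSpace Ω] {μ : Measure Ω} [Countable ι] {E : ι → Set Ω}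

theorem measure_eq_tsum_inter_of_ae_partition (hE : ∀ i, MeasurableSet (E i))
    (hdisj : Pairwise (Disjoint on E)) (hcover : ∀ᵐ ω ∂μ, ∃ i, ω ∈ E i)
    {A : Set Ω} (hA : MeasurableSet A) : μ A = ∑' i, μ (A ∩ E i) := by
  have hnull : μ (⋃ i, E i)ᶜ = 0 := ae_iff.mp (hcover.mono fun _ => Set.mem_iUnion.mpr)
  rw [← measure_inter_conull hnull, Set.inter_iUnion,
    measure_iUnion (fun i j hij => (hdisj hij).mono Set.inter_subset_right Set.inter_subset_right)
      fun i => hA.inter (hE i)]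

theorem measure_inter_eq_mul_of_ae_partition (hE : ∀ i, MeasurableSet (E i))
    (hdisj : Pairwise (Disjoint on E)) (hcover : ∀ᵐ ω ∂μ, ∃ i, ω ∈ E i)
    {X Y : Set Ω} (hX : MeasurableSet X) (hY : MeasurableSet Y)
    (hXY : ∀ i, μ (Y ∩ (X ∩ E i)) = μ Y * μ (X ∩ E i)) : μ (X ∩ Y) = μ Y * μ X := by
  rw [measure_eq_tsum_inter_of_ae_partition hE hdisj hcover (hX.inter hY),
    measure_eq_tsum_inter_of_ae_partition hE hdisj hcover hX, ← ENNReal.tsum_mul_left]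
  refine tsum_congr fun i => ?_
  rw [← hXY, Set.inter_right_comm, Set.inter_comm]

end Partition

section Rademacher

variable {Ω ι κ : Type*} [MeasurableSpace Ω] {μ : Measure Ω} [IsProbabilityMeasure μ]

theorem measure_eq_inv_two_of_rademacher {f : Ω → ℤ} (hf : Measurable f)
    (hrange : ∀ ω, f ω = 1 ∨ f ω = -1) (hhalf : μ {ω | f ω = 1} = 1 / 2)
    {d : ℤ} (hd : d = 1 ∨ d = -1) : μ (f ⁻¹' {d}) = 2⁻¹ := by
  rcases hd with rfl | rfl
  · exact hhalf.trans (one_div 2)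
  · have hcompl : f ⁻¹' {-1} = {ω | f ω = 1}ᶜ := by
      ext ω
      have := hrange ω
      simp only [Set.mem_preimage, Set.mem_singleton_iff, Set.mem_ofPred_eq, Set.mem_compl_iff]
      omega
    rw [hcompl, prob_compl_eq_one_sub (s := {ω | f ω = 1}) (hf (measurableSet_singleton 1)),
      hhalf, one_div, ENNReal.one_sub_inv_two]

theorem measure_cylinder_of_rademacher [Fintype κ] {ξ : ι → Ω → ℤ}
    (hmeas : ∀ j, Measurable (ξ j)) (hindep : iIndepFun ξ μ)
    (hrange : ∀ j ω, ξ j ω = 1 ∨ ξ j ω = -1)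
    (hhalf : ∀ j, μ {ω | ξ j ω = 1} = 1 / 2) {i : κ → ι} (hi : Injective i)
    {δ : κ → ℤ} (hδ : ∀ t, δ t = 1 ∨ δ t = -1) :
    μ {ω | ∀ t, ξ (i t) ω = δ t} = 2⁻¹ ^ Fintype.card κ := by
  have hcyl : {ω | ∀ t, ξ (i t) ω = δ t} = ⋂ t, ξ (i t) ⁻¹' {δ t} := by ext; simp
  rw [hcyl, (hindep.precomp hi).meas_iInter fun t => ⟨{δ t}, measurableSet_singleton _, rfl⟩,
    Finset.prod_congr rfl fun t _ =>
      measure_eq_inv_two_of_rademacher (hmeas _) (hrange _) (hhalf _) (hδ t),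
    Finset.prod_const, Finset.card_univ]

end Rademacher

section FirstPassage

variable (p : ℕ → Prop) (k : ℕ)

/-- `b` is the time of the `(k + 1)`-st failure of `p` and `σ` is the set of successes before it. -/
def IsSuccessRecord (b : ℕ) (σ : Finset ℕ) : Prop :=
  σ ⊆ Icc 1 (b - 1) ∧ σ.card + (k + 1) = b ∧ ∀ a, 1 ≤ a → a ≤ b → (p a ↔ a ∈ σ)

variable {p k}

theorem IsSuccessRecord.not_last {b : ℕ} {σ : Finset ℕ} (h : IsSuccessRecord p k b σ) :
    ¬ p b := fun hpb => by
  have := h.2.1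
  have := mem_Icc.mp (h.1 ((h.2.2 b (by omega) le_rfl).mp hpb))
  omega

variable (p) [DecidablePred p]

def failures (b : ℕ) : Finset ℕ := (Icc 1 b).filter fun a => ¬ p a

variable {p}

theorem card_failures_lt {b b' : ℕ} (hbb' : b < b') (hb' : ¬ p b') :
    (failures p b).card < (failures p b').card := by
  refine card_lt_card ((ssubset_iff_of_subset ?_).mpr ⟨b', ?_, ?_⟩)
  · exact filter_subset_filter _ (Icc_subset_Icc_right hbb'.le)
  · simp only [failures, mem_filter, mem_Icc]
    exact ⟨⟨by omega, le_rfl⟩, hb'⟩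
  · simp only [failures, mem_filter, mem_Icc]
    omega

namespace IsSuccessRecord

variable {b : ℕ} {σ : Finset ℕ}

theorem eq_filter (h : IsSuccessRecord p k b σ) : σ = (Icc 1 b).filter p := by
  ext a
  simp only [mem_filter, mem_Icc]
  have hsub := @h.1 a
  simp only [mem_Icc] at hsub
  constructor
  · intro ha
    have := hsub ha
    exact ⟨⟨this.1, by omega⟩, (h.2.2 a this.1 (by omega)).mpr ha⟩
  · rintro ⟨⟨h1, h2⟩, hpa⟩
    exact (h.2.2 a h1 h2).mp hpa

theorem card_failures (h : IsSuccessRecord p k b σ) : (failures p b).card = k + 1 := by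
  have hσ : σ ⊆ Icc 1 b := h.1.trans (Icc_subset_Icc_right (Nat.sub_le b 1))
  rw [failures, filter_not, ← h.eq_filter, card_sdiff_of_subset hσ, Nat.card_Icc]
  have := h.2.1
  omega

theorem unique {b' : ℕ} {σ' : Finset ℕ} (h : IsSuccessRecord p k b σ)
    (h' : IsSuccessRecord p k b' σ') : b = b' ∧ σ = σ' := by
  have hbb' : b = b' := by
    by_contra hne
    rcases Nat.lt_or_gt_of_ne hne with hlt | hlt
    · exact (card_failures_lt hlt h'.not_last).ne (h.card_failures.trans h'.card_failures.symm)
    · exact (card_failures_lt hlt h.not_last).ne (h'.card_failures.trans h.card_failures.symm)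
  subst hbb'
  exact ⟨rfl, h.eq_filter.trans h'.eq_filter.symm⟩

end IsSuccessRecord

theorem exists_isSuccessRecord (h : ∃ b, (failures p b).card = k + 1) :
    ∃ b σ, IsSuccessRecord p k b σ := by
  set B := Nat.find h
  have hB : (failures p B).card = k + 1 := Nat.find_spec h
  have hB0 : B ≠ 0 := fun h0 => by simp [h0, failures] at hB
  have hpB : ¬ p B := fun hpB => by
    refine Nat.find_min h (m := B - 1) (by omega) (hB ▸ congrArg card ?_)
    ext a
    simp only [failures, mem_filter, mem_Icc]
    constructor
    · rintro ⟨⟨h1, h2⟩, hpa⟩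
      exact ⟨⟨h1, by omega⟩, hpa⟩
    · rintro ⟨⟨h1, h2⟩, hpa⟩
      refine ⟨⟨h1, ?_⟩, hpa⟩
      rcases h2.lt_or_eq with h2 | rfl
      · omega
      · exact absurd hpB hpa
  refine ⟨B, (Icc 1 B).filter p, fun a ha => ?_, ?_, fun a h1 h2 => by simp [h1, h2]⟩
  · simp only [mem_filter, mem_Icc] at ha ⊢
    have : a ≠ B := fun haB => hpB (haB ▸ ha.2)
    omega
  · have := card_filter_add_card_filter_not (s := Icc 1 B) (p := p)
    rw [Nat.card_Icc] at this
    rw [failures] at hB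
    omega

end FirstPassage

theorem key_independence_lemma_general
    {Ω : Type*} [MeasurableSpace Ω] (μ : Measure Ω) [IsProbabilityMeasure μ]
    (k N : ℕ)
    (ξ : ℕ → Ω → ℤ) (hmeas : ∀ i, Measurable (ξ i))
    (hindep : iIndepFun ξ μ)
    (hrange : ∀ i ω, ξ i ω = 1 ∨ ξ i ω = -1)
    (hdist : ∀ i, μ {ω | ξ i ω = 1} = 1/2)
    (S : Set (Fin N → ℤ)) (hS : MeasurableSet S)
    (Ξ : ℕ → Ω → Fin N → ℤ)
    (hΞ : ∀ a ω (t : Fin N), Ξ a ω t = ξ (N * a - N + (t : ℕ) + 1) ω)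
    (hBfin : ∀ᵐ ω ∂μ, ∃ b : ℕ,
      ((Finset.Icc 1 b).filter fun a => Ξ a ω ∉ S).card = k + 1)
    (i : Fin k → ℕ) (hi : StrictMono i)
    (δ : Fin k → ℤ) (hδ : ∀ t, δ t = 1 ∨ δ t = -1)
    (X : Set Ω) (hX : X = {ω | ∀ t, ξ (i t) ω = δ t})
    (Sev : Finset ℕ → ℕ → Set Ω)
    (hSev : ∀ σ b, Sev σ b = {ω | ∀ a, 1 ≤ a → a ≤ b → (Ξ a ω ∈ S ↔ a ∈ σ)})
    (Y : Set Ω) (hYmeas : MeasurableSet Y)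
    (hY : ∀ b : ℕ, ∀ σ : Finset ℕ, σ ⊆ Finset.Icc 1 (b - 1) →
      σ.card + (k + 1) = b →
      μ (Y ∩ (X ∩ Sev σ b)) = μ Y * μ (X ∩ Sev σ b)) :
    μ (X ∩ Y) = (2 : ℝ≥0∞)⁻¹ ^ k * μ Y ∧ μ X = (2 : ℝ≥0∞)⁻¹ ^ k := by
  have hμX : μ X = 2⁻¹ ^ k := by
    simpa [hX] using measure_cylinder_of_rademacher hmeas hindep hrange hdist hi.injective hδ
  have hΞmeas : ∀ a, Measurable (Ξ a) := fun a =>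
    measurable_pi_lambda _ fun t => by simpa only [hΞ] using hmeas _
  have hSevmeas : ∀ σ b, MeasurableSet (Sev σ b) := by
    intro σ b
    rw [hSev]
    exact Measurable.setOf <| Measurable.forall fun a => measurable_const.imp <|
      measurable_const.imp <| (hS.mem.comp (hΞmeas a)).iff measurable_const
  let E : {v : ℕ × Finset ℕ // v.2 ⊆ Icc 1 (v.1 - 1) ∧ v.2.card + (k + 1) = v.1} → Set Ω :=
    fun v => Sev v.1.2 v.1.1
  have hE : ∀ v ω, ω ∈ E v ↔ IsSuccessRecord (fun a => Ξ a ω ∈ S) k v.1.1 v.1.2 := by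
    intro v ω
    simp only [E, hSev, IsSuccessRecord, v.2.1, v.2.2, true_and]
    rfl
  have hdisj : Pairwise (Disjoint on E) := fun v w hvw =>
    Set.disjoint_left.mpr fun ω hv hw => hvw <| by
      obtain ⟨hb, hσ⟩ := ((hE v ω).mp hv).unique ((hE w ω).mp hw)
      exact Subtype.ext (Prod.ext hb hσ)
  have hcover : ∀ᵐ ω ∂μ, ∃ v, ω ∈ E v := by
    filter_upwards [hBfin] with ω hb
    obtain ⟨b, σ, h⟩ := exists_isSuccessRecord hb
    exact ⟨⟨(b, σ), h.1, h.2.1⟩, (hE _ ω).mpr h⟩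
  have hXY := measure_inter_eq_mul_of_ae_partition (fun v => hSevmeas _ _) hdisj hcover
    (hX ▸ Measurable.setOf <| Measurable.forall fun t =>
      (hmeas (i t) (measurableSet_singleton (δ t))).mem) hYmeas fun v => hY _ _ v.2.1 v.2.2
  exact ⟨by rw [hXY, hμX, mul_comm], hμX⟩

/-- The key independence lemma. Let `ξ₁, ξ₂, …` be i.i.d. Rademacher, grouped
into blocks `Ξ_a = (ξ_{Na-N+1}, …, ξ_{Na})` for `a = 1, 2, …`, let
`S ⊆ {±1}^N`, and let `B` be the first time `b` at which exactly `k+1` of the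
blocks `Ξ_1, …, Ξ_b` fall outside `S` (assumed a.s. finite). Let
`X = {ξ_{i₁} = δ₁, …, ξ_{i_k} = δ_k}` be a cylinder event on `k` coordinates,
and for `σ ⊆ {1, …, b-1}` with `|σ| = b - (k+1)` let
`S(σ,b) = {Ξ_a ∈ S ⇔ a ∈ σ, ∀ a ≤ b}`. If the event `Y` satisfies
`P(Y ∩ (X ∩ S(σ,b))) = P(Y)·P(X ∩ S(σ,b))` for all such `σ, b`, then
`P(X ∩ Y) = 2^{-k}·P(Y)` (i.e. `P(X | Y) = P(X)`) and `P(X) = 2^{-k}`. -/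
theorem key_independence_lemma
    {Ω : Type*} [MeasurableSpace Ω] (μ : Measure Ω) [IsProbabilityMeasure μ]
    (k N : ℕ) (hk : 0 < k) (hN : k + 1 ≤ N)
    (ξ : ℕ → Ω → ℤ) (hmeas : ∀ i, Measurable (ξ i))
    (hindep : iIndepFun ξ μ)
    (hrange : ∀ i ω, ξ i ω = 1 ∨ ξ i ω = -1)
    (hdist : ∀ i, μ {ω | ξ i ω = 1} = 1/2)
    (S : Set (Fin N → ℤ)) (hS : MeasurableSet S)
    (Ξ : ℕ → Ω → Fin N → ℤ)
    (hΞ : ∀ a ω (t : Fin N), Ξ a ω t = ξ (N * a - N + (t : ℕ) + 1) ω)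
    (hBfin : ∀ᵐ ω ∂μ, ∃ b : ℕ,
      ((Finset.Icc 1 b).filter fun a => Ξ a ω ∉ S).card = k + 1)
    (i : Fin k → ℕ) (hi : StrictMono i) (hi1 : ∀ t, 1 ≤ i t)
    (δ : Fin k → ℤ) (hδ : ∀ t, δ t = 1 ∨ δ t = -1)
    (X : Set Ω) (hX : X = {ω | ∀ t, ξ (i t) ω = δ t})
    (Sev : Finset ℕ → ℕ → Set Ω)
    (hSev : ∀ σ b, Sev σ b = {ω | ∀ a, 1 ≤ a → a ≤ b → (Ξ a ω ∈ S ↔ a ∈ σ)})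
    (Y : Set Ω) (hYmeas : MeasurableSet Y)
    (hY : ∀ b : ℕ, ∀ σ : Finset ℕ, σ ⊆ Finset.Icc 1 (b - 1) →
      σ.card + (k + 1) = b →
      μ (Y ∩ (X ∩ Sev σ b)) = μ Y * μ (X ∩ Sev σ b)) :
    μ (X ∩ Y) = (2 : ℝ≥0∞)⁻¹ ^ k * μ Y ∧ μ X = (2 : ℝ≥0∞)⁻¹ ^ k :=
  key_independence_lemma_general μ k N ξ hmeas hindep hrange hdist S hS Ξ hΞ hBfin i hi δ hδ X hX
    Sev hSev Y hYmeas hY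
end
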